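/- arXiv:1508.01573 — 3 statements merged into one kernel-verified Lean document; each statement's English description precedes it below -/
import Mathlib

section
/- Let n₊, n₋ ≥ 1 be integers, m = n₊ + n₋ − 1, and define W₀ : (ℂ∖{0})^m → ℂ by W₀(y₁,…,y_m) = y₁ + ⋯ + y_m + (y₁⋯y_{n₊})/(y_{n₊+1}⋯y_m). Then y ∈ (ℂ∖{0})^m satisfies ∂W₀/∂yᵢ(y) = 0 for all i if and only if y₁ = ⋯ = y_{n₊} = −y_{n₊+1} = ⋯ = −y_m and y₁^{n₊ − n₋} = (−1)^{n₋}. -/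
open scoped BigOperators

/-- Critical points of the leading-order potential
`W₀(y) = y₁ + ⋯ + y_m + (y₁⋯y_{n₊})/(y_{n₊+1}⋯y_m)` (with `m = n₊ + n₋ − 1`) on `(ℂ∖{0})^m`
are exactly the points with `y₁ = ⋯ = y_{n₊} = −y_{n₊+1} = ⋯ = −y_m` and
`y₁^{n₊−n₋} = (−1)^{n₋}`. -/
theorem flip_potential_critical_points (np nm : ℕ) (hnp : 1 ≤ np) (hnm : 1 ≤ nm)
    (m : ℕ) (hm : m = np + nm - 1) (y : Fin m → ℂ) (hy : ∀ i, y i ≠ 0) :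
    (∀ i : Fin m,
        deriv (fun t =>
          (∑ l, Function.update y i t l) +
            (∏ l ∈ Finset.univ.filter (fun l : Fin m => (l : ℕ) < np),
                Function.update y i t l) /
              (∏ l ∈ Finset.univ.filter (fun l : Fin m => np ≤ (l : ℕ)),
                Function.update y i t l)) (y i) = 0)
      ↔ ((∀ i j : Fin m, (i : ℕ) < np → (j : ℕ) < np → y i = y j) ∧
         (∀ i j : Fin m, (i : ℕ) < np → np ≤ (j : ℕ) → y j = - y i) ∧
         (∀ i : Fin m, (i : ℕ) < np → y i ^ ((np : ℤ) - (nm : ℤ)) = (-1 : ℂ) ^ nm)) := by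
  obtain ⟨k, hk⟩ : ∃ k, nm = k + 1 := ⟨nm - 1, by omega⟩
  subst hk
  have hnpm : np ≤ m := by omega
  set s1 := Finset.univ.filter (fun l : Fin m => (l : ℕ) < np) with hs1
  set s2 := Finset.univ.filter (fun l : Fin m => np ≤ (l : ℕ)) with hs2
  have hc1 : s1.card = np := by
    rw [hs1, Finset.card_filter, Fin.sum_univ_eq_sum_range (fun n => if n < np then (1:ℕ) else 0),
      ← Finset.card_filter]
    have : Finset.filter (fun i => i < np) (Finset.range m) = Finset.range np := by
      ext i; simp; omega
    rw [this, Finset.card_range]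
  have hc2 : s2.card = k := by
    rw [hs2, Finset.card_filter, Fin.sum_univ_eq_sum_range (fun n => if np ≤ n then (1:ℕ) else 0),
      ← Finset.card_filter]
    have : Finset.filter (fun i => np ≤ i) (Finset.range m) = Finset.Ico np m := by
      ext i; simp [Finset.mem_Ico]; omega
    rw [this, Nat.card_Ico]; omega
  set P := ∏ l ∈ s1, y l with hPdef
  set Q := ∏ l ∈ s2, y l with hQdef
  have hQ : Q ≠ 0 := Finset.prod_ne_zero_iff.mpr fun l _ => hy l
  have hcrit : ∀ i : Fin m,
      deriv (fun t => (∑ l, Function.update y i t l) +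
        (∏ l ∈ s1, Function.update y i t l) / (∏ l ∈ s2, Function.update y i t l)) (y i) = 0
      ↔ (if (i : ℕ) < np then P = -(y i * Q) else P = y i * Q) := by
    intro i
    by_cases hi : (i : ℕ) < np
    · have hi1 : i ∈ s1 := Finset.mem_filter.mpr ⟨Finset.mem_univ _, hi⟩
      have hi2 : i ∉ s2 := by simp [hs2]; omega
      set C := ∏ l ∈ s1 \ {i}, y l with hCdef
      have hPC : P = y i * C := Finset.prod_eq_mul_prod_sdiff_singleton_of_mem hi1 y
      have hfun : (fun t => (∑ l, Function.update y i t l) +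
          (∏ l ∈ s1, Function.update y i t l) / (∏ l ∈ s2, Function.update y i t l))
          = fun t : ℂ => t + (∑ l ∈ Finset.univ \ {i}, y l) + (t * C) / Q := by
        funext t
        rw [Finset.sum_update_of_mem (Finset.mem_univ i), Finset.prod_update_of_mem hi1,
          Finset.prod_update_of_notMem hi2]
      rw [hfun]
      have hd : HasDerivAt (fun t : ℂ => t + (∑ l ∈ Finset.univ \ {i}, y l) + (t * C) / Q)
          (1 + (1 * C) / Q) (y i) :=
        (((hasDerivAt_id (y i)).add_const _).add (((hasDerivAt_id (y i)).mul_const C).div_const Q))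
      rw [hd.deriv, if_pos hi, one_mul]
      constructor
      · intro h
        have h1 : C / Q = -1 := by linear_combination h
        have h2 : C = -Q := by rw [div_eq_iff hQ] at h1; rw [h1]; ring
        rw [hPC, h2]; ring
      · intro h
        have h2 : C = -Q := by
          apply mul_left_cancel₀ (hy i)
          rw [← hPC, h]; ring
        rw [h2]; field_simp; ring
    · have hi2 : i ∈ s2 := Finset.mem_filter.mpr ⟨Finset.mem_univ _, le_of_not_gt hi⟩
      have hi1 : i ∉ s1 := by simp [hs1, hi]
      set D := ∏ l ∈ s2 \ {i}, y l with hDdef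
      have hQD : Q = y i * D := Finset.prod_eq_mul_prod_sdiff_singleton_of_mem hi2 y
      have hD : D ≠ 0 := by
        intro h0; apply hQ; rw [hQD, h0, mul_zero]
      have hfun : (fun t => (∑ l, Function.update y i t l) +
          (∏ l ∈ s1, Function.update y i t l) / (∏ l ∈ s2, Function.update y i t l))
          = fun t : ℂ => t + (∑ l ∈ Finset.univ \ {i}, y l) + P / (t * D) := by
        funext t
        rw [Finset.sum_update_of_mem (Finset.mem_univ i), Finset.prod_update_of_mem hi2,
          Finset.prod_update_of_notMem hi1]
      rw [hfun]
      have hyD : y i * D ≠ 0 := by rw [← hQD]; exact hQ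
      have hd : HasDerivAt (fun t : ℂ => t + (∑ l ∈ Finset.univ \ {i}, y l) + P / (t * D))
          (1 + (0 * (y i * D) - P * (1 * D)) / (y i * D) ^ 2) (y i) :=
        (((hasDerivAt_id (y i)).add_const _).add
          ((hasDerivAt_const (y i) P).div ((hasDerivAt_id (y i)).mul_const D) hyD))
      rw [hd.deriv, if_neg hi]
      rw [← hQD]
      constructor
      · intro h
        have h1 : (0 * Q - P * (1 * D)) / Q ^ 2 = -1 := by linear_combination h
        rw [div_eq_iff (pow_ne_zero 2 hQ)] at h1
        apply mul_right_cancel₀ hD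
        rw [mul_comm (y i) Q, mul_assoc, ← hQD]
        linear_combination -h1
      · intro h
        rw [h]
        field_simp
        linear_combination hQD
  refine Iff.trans (forall_congr' hcrit) ?_
  constructor
  · intro h
    have hpos : ∀ i : Fin m, (i : ℕ) < np → P = -(y i * Q) := by
      intro i hi; have := h i; rwa [if_pos hi] at this
    have hneg : ∀ i : Fin m, np ≤ (i : ℕ) → P = y i * Q := by
      intro i hi; have := h i; rwa [if_neg (not_lt.mpr hi)] at this
    have c1 : ∀ i j : Fin m, (i : ℕ) < np → (j : ℕ) < np → y i = y j := by
      intro i j hi hj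
      have := (hpos i hi).symm.trans (hpos j hj)
      have h2 : y i * Q = y j * Q := by linear_combination -this
      exact mul_right_cancel₀ hQ h2
    have c2 : ∀ i j : Fin m, (i : ℕ) < np → np ≤ (j : ℕ) → y j = - y i := by
      intro i j hi hj
      have := (hpos i hi).symm.trans (hneg j hj)
      apply mul_right_cancel₀ hQ
      linear_combination -this
    refine ⟨c1, c2, ?_⟩
    intro i hi
    have hP : P = y i ^ np := by
      rw [hPdef, Finset.prod_congr rfl (fun l hl => ?_), Finset.prod_const, hc1]
      exact c1 l i (Finset.mem_filter.mp hl).2 hi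
    have hQ' : Q = (-y i) ^ k := by
      rw [hQdef, Finset.prod_congr rfl (fun l hl => ?_), Finset.prod_const, hc2]
      exact c2 i l hi (Finset.mem_filter.mp hl).2
    have hkey : y i ^ np = (-1 : ℂ) ^ (k + 1) * y i ^ (k + 1) := by
      rw [← hP, hpos i hi, hQ']; ring
    rw [zpow_sub₀ (hy i), zpow_natCast, zpow_natCast, hkey, mul_div_assoc,
      div_self (pow_ne_zero _ (hy i)), mul_one]
  · rintro ⟨h1, h2, h3⟩ i
    have hm0 : 0 < m := by omega
    set i0 : Fin m := ⟨0, hm0⟩ with hi0def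
    have hi0 : (i0 : ℕ) < np := hnp
    have hkey : y i0 ^ np = (-1 : ℂ) ^ (k + 1) * y i0 ^ (k + 1) := by
      have := h3 i0 hi0
      rw [zpow_sub₀ (hy i0), zpow_natCast, zpow_natCast,
        div_eq_iff (pow_ne_zero _ (hy i0))] at this
      exact this
    have hP : P = y i0 ^ np := by
      rw [hPdef, Finset.prod_congr rfl (fun l hl => ?_), Finset.prod_const, hc1]
      exact h1 l i0 (Finset.mem_filter.mp hl).2 hi0
    have hQ' : Q = (-y i0) ^ k := by
      rw [hQdef, Finset.prod_congr rfl (fun l hl => ?_), Finset.prod_const, hc2]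
      exact h2 i0 l hi0 (Finset.mem_filter.mp hl).2
    by_cases hi : (i : ℕ) < np
    · rw [if_pos hi, hP, hQ', h1 i i0 hi hi0, hkey]; ring
    · rw [if_neg hi, hP, hQ', h2 i0 i hi0 (le_of_not_gt hi), hkey]; ring
end

section
/- Let Λ_{≥0} be the ring of Hahn series over ℂ with value group ℝ and support in [0,∞), and Λ_{>0} its ideal of series with support in (0,∞). Let W be a Laurent polynomial in m variables with coefficients in Λ_{≥0}, and write W = W₀ + W₁ where W₀ has coefficients in ℂ (the exponent-zero parts) and W₁ has coefficients in Λ_{>0}. Suppose y₀ ∈ (ℂ∖{0})^m is a critical point of W₀ at which the Hessian matrix (∂²W₀/∂yᵢ∂yⱼ)(y₀) is invertible. Then there exists y ∈ (Λ_{≥0})^m with yᵢ − (y₀)ᵢ ∈ Λ_{>0} for all i such that ∂W/∂yᵢ(y) = 0 for all i. -/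
open scoped BigOperators

/-- The leading-order potential of a Laurent polynomial `W` with coefficients `c k` in the
nonnegative Novikov ring: evaluate the exponent-zero coefficients over `ℂ`. -/
noncomputable def leadingPotential (m : ℕ) (c : (Fin m →₀ ℤ) →₀ HahnSeries ℝ ℂ)
    (y : Fin m → ℂ) : ℂ :=
  c.sum fun k a => a.coeff 0 * ∏ j, y j ^ (k j)

noncomputable abbrev KK := HahnSeries ℝ ℂ

/-- `x` has support in `M` and vanishing coefficients below `ρ`. -/
def OkS (M : Set ℝ) (ρ : ℝ) (x : KK) : Prop :=
  x.support ⊆ M ∧ ∀ r < ρ, x.coeff r = 0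

namespace OkS

variable {M : Set ℝ} {ρ σ : ℝ} {x y : KK}

theorem zero (ρ : ℝ) : OkS M ρ (0 : KK) := by
  constructor
  · simp [HahnSeries.support_zero]
  · intro r _; simp

theorem mono (h : σ ≤ ρ) (hx : OkS M ρ x) : OkS M σ x :=
  ⟨hx.1, fun r hr => hx.2 r (lt_of_lt_of_le hr h)⟩

theorem add (hx : OkS M ρ x) (hy : OkS M ρ y) : OkS M ρ (x + y) := by
  refine ⟨?_, fun r hr => by simp [HahnSeries.coeff_add, hx.2 r hr, hy.2 r hr]⟩
  refine (HahnSeries.support_add_subset _ _).trans ?_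
  exact Set.union_subset hx.1 hy.1

theorem neg (hx : OkS M ρ x) : OkS M ρ (-x) := by
  refine ⟨by simpa using hx.1, fun r hr => by simp [hx.2 r hr]⟩

theorem sub (hx : OkS M ρ x) (hy : OkS M ρ y) : OkS M ρ (x - y) := by
  simpa [sub_eq_add_neg] using hx.add hy.neg

theorem C (h0 : (0:ℝ) ∈ M) (z : ℂ) : OkS M 0 (HahnSeries.C z) := by
  constructor
  · refine (HahnSeries.support_single_subset).trans ?_
    simpa using h0
  · intro r hr
    rw [HahnSeries.C_apply, HahnSeries.coeff_single_of_ne (by exact ne_of_lt hr)]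

theorem one (h0 : (0:ℝ) ∈ M) : OkS M 0 (1 : KK) := by
  simpa using OkS.C h0 1

theorem intCast (h0 : (0:ℝ) ∈ M) (n : ℤ) : OkS M 0 ((n : KK)) := by
  have : HahnSeries.C ((n : ℤ) : ℂ) = ((n : ℤ) : KK) := map_intCast (HahnSeries.C : ℂ →+* KK) n
  rw [← this]; exact OkS.C h0 _

theorem nonneg_of_mem (hM0 : M ⊆ Set.Ici 0) (hx : OkS M ρ x) {r : ℝ}
    (hr : x.coeff r ≠ 0) : 0 ≤ r ∧ ρ ≤ r := by
  have hrM : r ∈ M := hx.1 hr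
  refine ⟨hM0 hrM, ?_⟩
  by_contra h
  exact hr (hx.2 r (lt_of_not_ge h))

theorem mul (hM0 : M ⊆ Set.Ici 0)
    (hMadd : ∀ a ∈ M, ∀ b ∈ M, a + b ∈ M)
    (hρ : 0 ≤ ρ) (hσ : 0 ≤ σ)
    (hx : OkS M ρ x) (hy : OkS M σ y) : OkS M (ρ + σ) (x * y) := by
  constructor
  · refine (HahnSeries.support_mul_subset).trans ?_
    rintro r ⟨a, ha, b, hb, rfl⟩
    exact hMadd a (hx.1 ha) b (hy.1 hb)
  · intro r hr
    rw [HahnSeries.coeff_mul]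
    refine Finset.sum_eq_zero ?_
    rintro ⟨a, b⟩ hab
    rw [Finset.mem_addAntidiagonal] at hab
    obtain ⟨ha, hb, habr⟩ := hab
    exfalso
    have h1 := hx.nonneg_of_mem hM0 (by simpa using ha)
    have h2 := hy.nonneg_of_mem hM0 (by simpa using hb)
    have : ρ + σ ≤ a + b := add_le_add h1.2 h2.2
    rw [habr] at this
    exact absurd hr (not_lt.mpr this)

theorem mul0l (hM0 : M ⊆ Set.Ici 0) (hMadd : ∀ a ∈ M, ∀ b ∈ M, a + b ∈ M)
    (hρ : 0 ≤ ρ) (hx : OkS M 0 x) (hy : OkS M ρ y) : OkS M ρ (x * y) := by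
  simpa using hx.mul hM0 hMadd le_rfl hρ hy

theorem mul0r (hM0 : M ⊆ Set.Ici 0) (hMadd : ∀ a ∈ M, ∀ b ∈ M, a + b ∈ M)
    (hρ : 0 ≤ ρ) (hx : OkS M ρ x) (hy : OkS M 0 y) : OkS M ρ (x * y) := by
  simpa using hx.mul hM0 hMadd hρ le_rfl hy

theorem sum {ι : Type*} (s : Finset ι) (f : ι → KK)
    (h : ∀ i ∈ s, OkS M ρ (f i)) : OkS M ρ (∑ i ∈ s, f i) := by
  classical
  induction s using Finset.induction_on with
  | empty => simpa using OkS.zero ρ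
  | insert _ _ hi ih =>
    rw [Finset.sum_insert hi]
    exact (h _ (Finset.mem_insert_self _ _)).add
      (ih fun i hi' => h i (Finset.mem_insert_of_mem hi'))

theorem pow (hM0 : M ⊆ Set.Ici 0) (hMadd : ∀ a ∈ M, ∀ b ∈ M, a + b ∈ M)
    (h0 : (0:ℝ) ∈ M) (hx : OkS M 0 x) (n : ℕ) : OkS M 0 (x ^ n) := by
  induction n with
  | zero => simpa using OkS.one h0
  | succ n ih => rw [pow_succ]; exact ih.mul0r hM0 hMadd le_rfl hx

theorem prod {ι : Type*} (hM0 : M ⊆ Set.Ici 0) (hMadd : ∀ a ∈ M, ∀ b ∈ M, a + b ∈ M)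
    (h0 : (0:ℝ) ∈ M) (s : Finset ι) (f : ι → KK)
    (h : ∀ i ∈ s, OkS M 0 (f i)) : OkS M 0 (∏ i ∈ s, f i) := by
  classical
  induction s using Finset.induction_on with
  | empty => simpa using OkS.one h0
  | insert _ _ hi ih =>
    rw [Finset.prod_insert hi]
    exact (h _ (Finset.mem_insert_self _ _)).mul0l hM0 hMadd le_rfl
      (ih fun i hi' => h i (Finset.mem_insert_of_mem hi'))

theorem small {ε : ℝ} (hε : ∀ r ∈ M, r ≠ 0 → ε ≤ r)
    (hx : OkS M 0 x) (h0 : x.coeff 0 = 0) : OkS M ε x := by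
  refine ⟨hx.1, fun r hr => ?_⟩
  by_contra h
  have hrM : r ∈ M := hx.1 h
  rcases eq_or_ne r 0 with rfl | hr0
  · exact h h0
  · exact absurd hr (not_lt.mpr (hε r hrM hr0))

theorem eq_zero_of_forall {x : KK} (h : ∀ ρ : ℝ, ∃ σ : ℝ, ρ < σ ∧ ∀ r < σ, x.coeff r = 0) :
    x = 0 := by
  ext r
  obtain ⟨σ, hσ, h2⟩ := h r
  exact h2 r hσ

end OkS

theorem supp_nonneg {x : KK} (hx : ∀ r < (0:ℝ), x.coeff r = 0) {a : ℝ}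
    (ha : a ∈ x.support) : 0 ≤ a := by
  rw [HahnSeries.mem_support] at ha
  by_contra h
  exact ha (hx a (lt_of_not_ge h))

/-- coefficient at 0 is multiplicative for nonneg-supported series -/
theorem coeff_zero_mul {x y : KK} (hx : ∀ r < (0:ℝ), x.coeff r = 0)
    (hy : ∀ r < (0:ℝ), y.coeff r = 0) :
    (x * y).coeff 0 = x.coeff 0 * y.coeff 0 := by
  rw [HahnSeries.coeff_mul]
  rcases eq_or_ne (x.coeff 0 * y.coeff 0) 0 with h0 | h0
  · rw [h0]
    refine Finset.sum_eq_zero ?_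
    rintro ⟨a, b⟩ hab
    rw [Finset.mem_addAntidiagonal] at hab
    obtain ⟨ha, hb, habr⟩ := hab
    have ha' : 0 ≤ a := supp_nonneg hx ha
    have hb' : 0 ≤ b := supp_nonneg hy hb
    have ha0 : a = 0 := by linarith
    have hb0 : b = 0 := by linarith
    rw [ha0, hb0]; exact h0
  · have hx0 : x.coeff 0 ≠ 0 := fun h => h0 (by rw [h, zero_mul])
    have hy0 : y.coeff 0 ≠ 0 := fun h => h0 (by rw [h, mul_zero])
    rw [Finset.sum_eq_single ((0:ℝ), (0:ℝ))]
    · rintro ⟨a, b⟩ hab hne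
      rw [Finset.mem_addAntidiagonal] at hab
      obtain ⟨ha, hb, habr⟩ := hab
      have ha' : 0 ≤ a := supp_nonneg hx ha
      have hb' : 0 ≤ b := supp_nonneg hy hb
      exfalso
      apply hne
      have ha0 : a = 0 := by linarith
      have hb0 : b = 0 := by linarith
      simp [ha0, hb0]
    · intro h
      rw [Finset.mem_addAntidiagonal] at h
      exfalso
      refine h ⟨?_, ?_, by simp⟩
      · rwa [HahnSeries.mem_support]
      · rwa [HahnSeries.mem_support]

theorem coeff_zero_prod {ι : Type*} (s : Finset ι) (f : ι → KK)
    (h : ∀ i ∈ s, ∀ r < (0:ℝ), (f i).coeff r = 0) :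
    (∏ i ∈ s, f i).coeff 0 = ∏ i ∈ s, (f i).coeff 0 := by
  classical
  induction s using Finset.induction_on with
  | empty => simp
  | @insert a s hi ih =>
    rw [Finset.prod_insert hi, Finset.prod_insert hi,
      coeff_zero_mul (h a (Finset.mem_insert_self _ _)) ?_,
      ih fun i hi' => h i (Finset.mem_insert_of_mem hi')]
    intro r hr
    have : OkS (Set.Ici 0) 0 (∏ i ∈ s, f i) := by
      refine OkS.prod (le_refl _) (fun a ha b hb => ?_) (by simp) s f ?_
      · exact Set.mem_Ici.mpr (add_nonneg (Set.mem_Ici.mp ha) (Set.mem_Ici.mp hb))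
      · intro i hi'
        refine ⟨?_, h i (Finset.mem_insert_of_mem hi')⟩
        intro t ht
        simp only [Set.mem_Ici]
        exact supp_nonneg (h i (Finset.mem_insert_of_mem hi')) ht
    exact this.2 r hr
namespace OkS

variable {M : Set ℝ} {ρ ε : ℝ} {x y : KK}

theorem natCast (h0 : (0:ℝ) ∈ M) (n : ℕ) : OkS M 0 ((n : KK)) := by
  have := OkS.intCast (M := M) h0 (n : ℤ)
  simpa using this

theorem mul00 (hM0 : M ⊆ Set.Ici 0) (hMadd : ∀ a ∈ M, ∀ b ∈ M, a + b ∈ M)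
    (hx : OkS M 0 x) (hy : OkS M 0 y) : OkS M 0 (x * y) := by
  simpa using hx.mul hM0 hMadd le_rfl le_rfl hy

end OkS

section Expand

variable {M : Set ℝ} {ρ ε : ℝ}

theorem pow_expand (hM0 : M ⊆ Set.Ici 0) (hMadd : ∀ a ∈ M, ∀ b ∈ M, a + b ∈ M)
    (h0M : (0:ℝ) ∈ M)
    (hρ : 0 ≤ ρ) {a δ : KK} (ha : OkS M 0 a) (hδ : OkS M ρ δ) (e : ℕ) :
    OkS M (ρ + ρ) ((a + δ) ^ e - a ^ e - (e : KK) * a ^ (e - 1) * δ) := by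
  induction e with
  | zero => simpa using OkS.zero (ρ + ρ)
  | succ n ih =>
    have hz : (n : KK) * (a * a ^ (n - 1) - a ^ n) = 0 := by
      cases n with
      | zero => simp
      | succ m => rw [Nat.succ_sub_one, ← pow_succ']; simp
    have key : (a + δ) ^ (n+1) - a ^ (n+1) - ((n+1 : ℕ) : KK) * a ^ ((n+1) - 1) * δ
        = (n : KK) * (a * a ^ (n - 1) - a ^ n) * δ
          + a * ((a + δ) ^ n - a ^ n - (n : KK) * a ^ (n - 1) * δ)
          + ((n : KK) * a ^ (n - 1)) * δ * δ
          + δ * ((a + δ) ^ n - a ^ n - (n : KK) * a ^ (n - 1) * δ) := by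
      push_cast
      ring
    rw [key, hz, zero_mul, zero_add]
    have hg0 : OkS M 0 ((n : KK) * a ^ (n - 1)) :=
      (OkS.natCast h0M n).mul00 hM0 hMadd (ha.pow hM0 hMadd h0M (n-1))
    refine OkS.add (OkS.add ?_ ?_) ?_
    · exact ha.mul0l hM0 hMadd (by linarith) ih
    · exact (hg0.mul0l hM0 hMadd hρ hδ).mul hM0 hMadd hρ hρ hδ
    · exact ((hδ.mul hM0 hMadd hρ (by linarith) ih).mono (by linarith))

/-- first-order congruence: polynomial expressions are Lipschitz. -/
theorem pow_congr (hM0 : M ⊆ Set.Ici 0) (hMadd : ∀ a ∈ M, ∀ b ∈ M, a + b ∈ M)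
    (h0M : (0:ℝ) ∈ M) (hε : 0 ≤ ε) {x y : KK}
    (hx : OkS M 0 x) (hy : OkS M 0 y) (hd : OkS M ε (x - y)) (n : ℕ) :
    OkS M ε (x ^ n - y ^ n) := by
  induction n with
  | zero => simpa using OkS.zero ε
  | succ n ih =>
    have key : x ^ (n+1) - y ^ (n+1) = x ^ n * (x - y) + (x ^ n - y ^ n) * y := by ring
    rw [key]
    exact ((hx.pow hM0 hMadd h0M n).mul0l hM0 hMadd hε hd).add (ih.mul0r hM0 hMadd hε hy)

theorem prod_congr {ι : Type*} [DecidableEq ι]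
    (hM0 : M ⊆ Set.Ici 0) (hMadd : ∀ a ∈ M, ∀ b ∈ M, a + b ∈ M)
    (h0M : (0:ℝ) ∈ M) (hε : 0 ≤ ε) {x y : ι → KK}
    (hx : ∀ j, OkS M 0 (x j)) (hy : ∀ j, OkS M 0 (y j))
    (hd : ∀ j, OkS M ε (x j - y j)) (s : Finset ι) :
    OkS M ε (∏ j ∈ s, x j - ∏ j ∈ s, y j) := by
  induction s using Finset.induction_on with
  | empty => simpa using OkS.zero ε
  | @insert i s hi ih =>
    rw [Finset.prod_insert hi, Finset.prod_insert hi]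
    have key : x i * ∏ j ∈ s, x j - y i * ∏ j ∈ s, y j
        = (x i - y i) * ∏ j ∈ s, x j + y i * (∏ j ∈ s, x j - ∏ j ∈ s, y j) := by ring
    rw [key]
    exact ((hd i).mul0r hM0 hMadd hε (OkS.prod hM0 hMadd h0M s x fun j _ => hx j)).add
      ((hy i).mul0l hM0 hMadd hε ih)

theorem prod_expand {ι : Type*} [DecidableEq ι]
    (hM0 : M ⊆ Set.Ici 0) (hMadd : ∀ a ∈ M, ∀ b ∈ M, a + b ∈ M)
    (h0M : (0:ℝ) ∈ M) (hρ : 0 ≤ ρ) {a δ : ι → KK} (e : ι → ℕ)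
    (ha : ∀ j, OkS M 0 (a j)) (hδ : ∀ j, OkS M ρ (δ j)) (s : Finset ι) :
    OkS M (ρ + ρ) (∏ j ∈ s, (a j + δ j) ^ (e j) - ∏ j ∈ s, (a j) ^ (e j)
      - ∑ j ∈ s, (e j : KK) * (a j) ^ (e j - 1) * δ j * ∏ l ∈ s.erase j, (a l) ^ (e l)) := by
  induction s using Finset.induction_on with
  | empty => simpa using OkS.zero (ρ + ρ)
  | @insert i s hi ih =>
    have ha' : ∀ j, OkS M 0 (a j + δ j) := fun j => (ha j).add ((hδ j).mono hρ)
    have hX1 : ∀ j, OkS M ρ ((e j : KK) * (a j) ^ (e j - 1) * δ j) := fun j =>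
      ((OkS.natCast h0M (e j)).mul00 hM0 hMadd ((ha j).pow hM0 hMadd h0M _)).mul0l hM0 hMadd hρ (hδ j)
    have hP0 : ∀ t : Finset ι, OkS M 0 (∏ j ∈ t, (a j) ^ (e j)) := fun t =>
      OkS.prod hM0 hMadd h0M t _ fun j _ => (ha j).pow hM0 hMadd h0M _
    have hP : ∀ t : Finset ι, OkS M 0 (∏ j ∈ t, (a j + δ j) ^ (e j)) := fun t =>
      OkS.prod hM0 hMadd h0M t _ fun j _ => (ha' j).pow hM0 hMadd h0M _
    have hP1 : ∀ t : Finset ι,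
        OkS M ρ (∑ j ∈ t, (e j : KK) * (a j) ^ (e j - 1) * δ j * ∏ l ∈ t.erase j, (a l) ^ (e l)) :=
      fun t => OkS.sum t _ fun j _ => (hX1 j).mul0r hM0 hMadd hρ (hP0 _)
    have hPd : OkS M ρ (∏ j ∈ s, (a j + δ j) ^ (e j) - ∏ j ∈ s, (a j) ^ (e j)) := by
      have := (ih.mono (by linarith : ρ ≤ ρ + ρ)).add (hP1 s)
      simpa using this
    have hXd : OkS M ρ ((a i + δ i) ^ (e i) - (a i) ^ (e i)) := by
      have h2 := ((pow_expand hM0 hMadd h0M hρ (ha i) (hδ i) (e i)).mono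
        (by linarith : ρ ≤ ρ + ρ)).add (hX1 i)
      simpa using h2
    -- split the gradient sum over `cons i s`
    have hsum : ∑ j ∈ insert i s,
          (e j : KK) * (a j) ^ (e j - 1) * δ j * ∏ l ∈ (insert i s).erase j, (a l) ^ (e l)
        = (e i : KK) * (a i) ^ (e i - 1) * δ i * ∏ l ∈ s, (a l) ^ (e l)
          + (a i) ^ (e i) *
            ∑ j ∈ s, (e j : KK) * (a j) ^ (e j - 1) * δ j * ∏ l ∈ s.erase j, (a l) ^ (e l) := by
      rw [Finset.sum_insert hi, Finset.erase_insert hi]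
      congr 1
      rw [Finset.mul_sum]
      refine Finset.sum_congr rfl fun j hj => ?_
      have hij : j ≠ i := fun h => hi (h ▸ hj)
      rw [Finset.erase_insert_of_ne hij.symm, Finset.prod_insert (fun h => hi (Finset.mem_of_mem_erase h))]
      ring
    rw [Finset.prod_insert hi, Finset.prod_insert hi, hsum]
    have key : (a i + δ i) ^ (e i) * ∏ j ∈ s, (a j + δ j) ^ (e j)
          - (a i) ^ (e i) * ∏ j ∈ s, (a j) ^ (e j)
          - ((e i : KK) * (a i) ^ (e i - 1) * δ i * ∏ l ∈ s, (a l) ^ (e l)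
            + (a i) ^ (e i) *
              ∑ j ∈ s, (e j : KK) * (a j) ^ (e j - 1) * δ j * ∏ l ∈ s.erase j, (a l) ^ (e l))
        = ((a i + δ i) ^ (e i) - (a i) ^ (e i) - (e i : KK) * (a i) ^ (e i - 1) * δ i)
            * ∏ j ∈ s, (a j + δ j) ^ (e j)
          + (a i) ^ (e i) * (∏ j ∈ s, (a j + δ j) ^ (e j) - ∏ j ∈ s, (a j) ^ (e j)
              - ∑ j ∈ s, (e j : KK) * (a j) ^ (e j - 1) * δ j * ∏ l ∈ s.erase j, (a l) ^ (e l))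
          + ((e i : KK) * (a i) ^ (e i - 1) * δ i)
            * (∏ j ∈ s, (a j + δ j) ^ (e j) - ∏ j ∈ s, (a j) ^ (e j)) := by ring
    rw [key]
    refine OkS.add (OkS.add ?_ ?_) ?_
    · exact (pow_expand hM0 hMadd h0M hρ (ha i) (hδ i) (e i)).mul0r hM0 hMadd (by linarith) (hP s)
    · exact ((ha i).pow hM0 hMadd h0M (e i)).mul0l hM0 hMadd (by linarith) ih
    · exact (hX1 i).mul hM0 hMadd hρ hρ hPd

end Expand
section Analysis

open Finset

variable {m : ℕ} (c : (Fin m →₀ ℤ) →₀ HahnSeries ℝ ℂ) (y₀ : Fin m → ℂ)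

theorem lp_eq (y : Fin m → ℂ) :
    leadingPotential m c y = ∑ k ∈ c.support, (c k).coeff 0 * ∏ j, y j ^ (k j) := rfl

theorem hasDerivAt_lp (u : Fin m → ℂ) (j : Fin m) (x : ℂ) (hx : x ≠ 0) :
    HasDerivAt (fun t => leadingPotential m c (Function.update u j t))
      (∑ k ∈ c.support, (c k).coeff 0 *
        ((k j : ℂ) * x ^ ((k j) - 1) * ∏ l ∈ univ.erase j, u l ^ (k l))) x := by
  have hfun : ∀ t, leadingPotential m c (Function.update u j t)
      = ∑ k ∈ c.support, (c k).coeff 0 * (t ^ (k j) * ∏ l ∈ univ.erase j, u l ^ (k l)) := by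
    intro t
    rw [lp_eq]
    refine Finset.sum_congr rfl fun k _ => ?_
    congr 1
    rw [← Finset.mul_prod_erase Finset.univ _ (Finset.mem_univ j)]
    congr 1
    · rw [Function.update_self]
    · exact Finset.prod_congr rfl fun l hl =>
        by rw [Function.update_of_ne (Finset.ne_of_mem_erase hl)]
  simp only [funext hfun]
  refine HasDerivAt.fun_sum fun k _ => ?_
  have h1 : HasDerivAt (fun t : ℂ => t ^ (k j)) ((k j : ℂ) * x ^ (k j - 1)) x :=
    hasDerivAt_zpow (k j) x (Or.inl hx)
  have h2 := (h1.mul_const (∏ l ∈ univ.erase j, u l ^ (k l))).const_mul ((c k).coeff 0)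
  simpa [mul_assoc] using h2

theorem deriv_lp (u : Fin m → ℂ) (j : Fin m) (x : ℂ) (hx : x ≠ 0) :
    deriv (fun t => leadingPotential m c (Function.update u j t)) x
      = ∑ k ∈ c.support, (c k).coeff 0 *
        ((k j : ℂ) * x ^ ((k j) - 1) * ∏ l ∈ univ.erase j, u l ^ (k l)) :=
  (hasDerivAt_lp c u j x hx).deriv

/-- `x ^ (n-1) * x = x ^ n` for `x ≠ 0`. -/
theorem zpow_sub_one_mul {x : ℂ} (hx : x ≠ 0) (n : ℤ) : x ^ (n - 1) * x = x ^ n := by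
  calc x ^ (n - 1) * x = x ^ (n - 1) * x ^ (1:ℤ) := by rw [zpow_one]
    _ = x ^ n := by rw [← zpow_add₀ hx, sub_add_cancel]

theorem T1_eq (hy₀ : ∀ i, y₀ i ≠ 0) (hcrit : ∀ i, deriv (fun t =>
      leadingPotential m c (Function.update y₀ i t)) (y₀ i) = 0) (i : Fin m) :
    ∑ k ∈ c.support, (c k).coeff 0 * (k i : ℂ) * ∏ l, y₀ l ^ (k l) = 0 := by
  have h := hcrit i
  rw [deriv_lp c y₀ i (y₀ i) (hy₀ i)] at h
  have h2 := congrArg (fun z => y₀ i * z) h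
  simp only [mul_zero] at h2
  rw [Finset.mul_sum] at h2
  rw [← h2]
  refine Finset.sum_congr rfl fun k _ => ?_
  rw [← Finset.mul_prod_erase Finset.univ (fun l => y₀ l ^ (k l)) (Finset.mem_univ i)]
  have : y₀ i * ((c k).coeff 0 * ((k i : ℂ) * y₀ i ^ (k i - 1) * ∏ l ∈ univ.erase i, y₀ l ^ (k l)))
      = (c k).coeff 0 * (k i : ℂ) * ((y₀ i ^ (k i - 1) * y₀ i) * ∏ l ∈ univ.erase i, y₀ l ^ (k l)) := by
    ring
  rw [this, zpow_sub_one_mul (hy₀ i)]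

end Analysis

section Hessian

open Finset

variable {m : ℕ} (c : (Fin m →₀ ℤ) →₀ HahnSeries ℝ ℂ) (y₀ : Fin m → ℂ)

/-- The complex "clean Hessian" matrix. -/
noncomputable def Qmat (i j : Fin m) : ℂ :=
  ∑ k ∈ c.support, (c k).coeff 0 * (k i : ℂ) * (k j : ℂ) * ∏ l, y₀ l ^ (k l)

theorem hess_entry (hy₀ : ∀ i, y₀ i ≠ 0)
    (hcrit : ∀ i, deriv (fun t =>
      leadingPotential m c (Function.update y₀ i t)) (y₀ i) = 0) (i j : Fin m) :
    y₀ i * (deriv (fun s => deriv (fun t =>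
        leadingPotential m c (Function.update (Function.update y₀ i s) j t))
      (Function.update y₀ i s j)) (y₀ i)) * y₀ j = Qmat c y₀ i j := by
  rcases eq_or_ne j i with rfl | hij
  · -- diagonal case
    have hfun : (fun s => deriv (fun t =>
          leadingPotential m c (Function.update (Function.update y₀ j s) j t))
        (Function.update y₀ j s j))
        = fun s => deriv (fun t => leadingPotential m c (Function.update y₀ j t)) s := by
      funext s
      rw [Function.update_self]
      congr 1
      funext t
      rw [Function.update_idem]
    rw [hfun]
    have hev : (fun s => deriv (fun t => leadingPotential m c (Function.update y₀ j t)) s)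
        =ᶠ[nhds (y₀ j)] fun s => ∑ k ∈ c.support,
          ((c k).coeff 0 * ((k j : ℂ) * ∏ l ∈ univ.erase j, y₀ l ^ (k l))) * s ^ (k j - 1) := by
      filter_upwards [eventually_ne_nhds (hy₀ j)] with s hs
      rw [deriv_lp c y₀ j s hs]
      exact Finset.sum_congr rfl fun k _ => by ring
    rw [hev.deriv_eq]
    have hder : HasDerivAt (fun s : ℂ => ∑ k ∈ c.support,
        ((c k).coeff 0 * ((k j : ℂ) * ∏ l ∈ univ.erase j, y₀ l ^ (k l))) * s ^ (k j - 1))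
        (∑ k ∈ c.support,
          ((c k).coeff 0 * ((k j : ℂ) * ∏ l ∈ univ.erase j, y₀ l ^ (k l)))
            * (((k j - 1 : ℤ) : ℂ) * y₀ j ^ (k j - 1 - 1))) (y₀ j) :=
      HasDerivAt.fun_sum fun k _ =>
        (hasDerivAt_zpow (k j - 1) (y₀ j) (Or.inl (hy₀ j))).const_mul _
    rw [hder.deriv]
    -- now: y₀ j * ∑ ... * y₀ j = Qmat - T1-term
    have hT1 := T1_eq c y₀ hy₀ hcrit j
    rw [Finset.mul_sum, Finset.sum_mul]
    have : ∀ k ∈ c.support,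
        y₀ j * (((c k).coeff 0 * ((k j : ℂ) * ∏ l ∈ univ.erase j, y₀ l ^ (k l)))
            * (((k j - 1 : ℤ) : ℂ) * y₀ j ^ (k j - 1 - 1))) * y₀ j
        = (c k).coeff 0 * (k j : ℂ) * (k j : ℂ) * ∏ l, y₀ l ^ (k l)
          - (c k).coeff 0 * (k j : ℂ) * ∏ l, y₀ l ^ (k l) := by
      intro k _
      have e1 : y₀ j * (((c k).coeff 0 * ((k j : ℂ) * ∏ l ∈ univ.erase j, y₀ l ^ (k l)))
            * (((k j - 1 : ℤ) : ℂ) * y₀ j ^ (k j - 1 - 1))) * y₀ j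
          = (c k).coeff 0 * (k j : ℂ) * ((k j : ℂ) - 1) *
              ((y₀ j ^ (k j - 1 - 1) * y₀ j * y₀ j) * ∏ l ∈ univ.erase j, y₀ l ^ (k l)) := by
        push_cast
        ring
      rw [e1, zpow_sub_one_mul (hy₀ j) (k j - 1), zpow_sub_one_mul (hy₀ j) (k j),
        ← Finset.mul_prod_erase Finset.univ (fun l => y₀ l ^ (k l)) (Finset.mem_univ j)]
      ring
    rw [Finset.sum_congr rfl this, Finset.sum_sub_distrib, hT1, sub_zero, Qmat]
  · -- off-diagonal case
    have hiej : i ∈ univ.erase j := Finset.mem_erase.mpr ⟨fun h => hij (h.symm), Finset.mem_univ i⟩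
    have hfun : (fun s => deriv (fun t =>
          leadingPotential m c (Function.update (Function.update y₀ i s) j t))
        (Function.update y₀ i s j))
        = fun s => ∑ k ∈ c.support,
            ((c k).coeff 0 * ((k j : ℂ) * y₀ j ^ (k j - 1)
              * ∏ l ∈ (univ.erase j).erase i, y₀ l ^ (k l))) * s ^ (k i) := by
      funext s
      rw [Function.update_of_ne hij, deriv_lp c (Function.update y₀ i s) j (y₀ j) (hy₀ j)]
      refine Finset.sum_congr rfl fun k _ => ?_
      rw [← Finset.mul_prod_erase (univ.erase j)
        (fun l => (Function.update y₀ i s) l ^ (k l)) hiej, Function.update_self]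
      have hprod : ∏ l ∈ (univ.erase j).erase i, (Function.update y₀ i s) l ^ (k l)
          = ∏ l ∈ (univ.erase j).erase i, y₀ l ^ (k l) :=
        Finset.prod_congr rfl fun l hl => by
          rw [Function.update_of_ne (Finset.ne_of_mem_erase hl)]
      rw [hprod]
      ring
    rw [hfun]
    have hder : HasDerivAt (fun s : ℂ => ∑ k ∈ c.support,
        ((c k).coeff 0 * ((k j : ℂ) * y₀ j ^ (k j - 1)
          * ∏ l ∈ (univ.erase j).erase i, y₀ l ^ (k l))) * s ^ (k i))
        (∑ k ∈ c.support,
          ((c k).coeff 0 * ((k j : ℂ) * y₀ j ^ (k j - 1)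
            * ∏ l ∈ (univ.erase j).erase i, y₀ l ^ (k l)))
              * (((k i : ℤ) : ℂ) * y₀ i ^ (k i - 1))) (y₀ i) :=
      HasDerivAt.fun_sum fun k _ =>
        (hasDerivAt_zpow (k i) (y₀ i) (Or.inl (hy₀ i))).const_mul _
    rw [hder.deriv, Finset.mul_sum, Finset.sum_mul, Qmat]
    refine Finset.sum_congr rfl fun k _ => ?_
    have e1 : y₀ i * (((c k).coeff 0 * ((k j : ℂ) * y₀ j ^ (k j - 1)
          * ∏ l ∈ (univ.erase j).erase i, y₀ l ^ (k l)))
            * (((k i : ℤ) : ℂ) * y₀ i ^ (k i - 1))) * y₀ j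
        = (c k).coeff 0 * (k i : ℂ) * (k j : ℂ) *
            ((y₀ i ^ (k i - 1) * y₀ i) * ((y₀ j ^ (k j - 1) * y₀ j)
              * ∏ l ∈ (univ.erase j).erase i, y₀ l ^ (k l))) := by
      push_cast
      ring
    rw [e1, zpow_sub_one_mul (hy₀ i), zpow_sub_one_mul (hy₀ j),
      ← Finset.mul_prod_erase Finset.univ (fun l => y₀ l ^ (k l)) (Finset.mem_univ j),
      ← Finset.mul_prod_erase (univ.erase j) (fun l => y₀ l ^ (k l)) hiej]
    ring

end Hessian

section Amatrix

open Finset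

variable {m : ℕ} (c : (Fin m →₀ ℤ) →₀ HahnSeries ℝ ℂ) (y₀ : Fin m → ℂ)

/-- shift making all exponents nonnegative -/
noncomputable def Nshift : Fin m → ℕ := fun j => c.support.sup fun k => (-(k j)).toNat

/-- shifted (nonnegative) exponents -/
noncomputable def eexp (k : Fin m →₀ ℤ) (j : Fin m) : ℕ := (k j + Nshift c j).toNat

theorem eexp_cast {k : Fin m →₀ ℤ} (hk : k ∈ c.support) (j : Fin m) :
    ((eexp c k j : ℤ)) = k j + Nshift c j := by
  refine Int.toNat_of_nonneg ?_
  have h1 : (-(k j)).toNat ≤ Nshift c j := Finset.le_sup (f := fun k => (-(k j)).toNat) hk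
  have h2 : -(k j) ≤ ((-(k j)).toNat : ℤ) := Int.self_le_toNat _
  have h3 : ((((-(k j)).toNat : ℕ)) : ℤ) ≤ (Nshift c j : ℤ) := by exact_mod_cast h1
  omega

/-- gradient of a shifted monomial at `y₀` -/
noncomputable def dgrad (k : Fin m →₀ ℤ) (j : Fin m) : ℂ :=
  (eexp c k j : ℂ) * y₀ j ^ (eexp c k j - 1) * ∏ l ∈ univ.erase j, y₀ l ^ (eexp c k l)

/-- the complex linearization matrix -/
noncomputable def Amat : Matrix (Fin m) (Fin m) ℂ :=
  Matrix.of fun i j => ∑ k ∈ c.support, ((k i : ℤ) : ℂ) * (c k).coeff 0 * dgrad c y₀ k j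

theorem dgrad_mul (hy₀ : ∀ i, y₀ i ≠ 0) (k : Fin m →₀ ℤ) (j : Fin m) :
    dgrad c y₀ k j * y₀ j = (eexp c k j : ℂ) * ∏ l, y₀ l ^ (eexp c k l) := by
  rcases h : eexp c k j with _ | n
  · simp [dgrad, h]
  · rw [dgrad, h, ← Finset.mul_prod_erase Finset.univ (fun l => y₀ l ^ (eexp c k l))
      (Finset.mem_univ j), h]
    have : (n + 1) - 1 = n := rfl
    rw [this, pow_succ]
    ring

theorem prod_pow_eexp (hy₀ : ∀ i, y₀ i ≠ 0) {k : Fin m →₀ ℤ} (hk : k ∈ c.support) :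
    (∏ l, y₀ l ^ (eexp c k l)) = (∏ l, y₀ l ^ (Nshift c l)) * ∏ l, y₀ l ^ (k l) := by
  rw [← Finset.prod_mul_distrib]
  refine Finset.prod_congr rfl fun l _ => ?_
  have h1 : y₀ l ^ (eexp c k l) = y₀ l ^ ((eexp c k l : ℤ)) := (zpow_natCast _ _).symm
  rw [h1, eexp_cast c hk, add_comm, zpow_add₀ (hy₀ l), zpow_natCast]

theorem detAmat_ne (hy₀ : ∀ i, y₀ i ≠ 0)
    (hcrit : ∀ i, deriv (fun t =>
      leadingPotential m c (Function.update y₀ i t)) (y₀ i) = 0)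
    (hhess : (Matrix.of fun i j : Fin m =>
        deriv (fun s => deriv (fun t =>
            leadingPotential m c (Function.update (Function.update y₀ i s) j t))
          (Function.update y₀ i s j)) (y₀ i)).det ≠ 0) :
    (Amat c y₀).det ≠ 0 := by
  set E : Matrix (Fin m) (Fin m) ℂ := Matrix.of fun i j : Fin m =>
        deriv (fun s => deriv (fun t =>
            leadingPotential m c (Function.update (Function.update y₀ i s) j t))
          (Function.update y₀ i s j)) (y₀ i) with hE
  set D : Matrix (Fin m) (Fin m) ℂ := Matrix.diagonal y₀ with hD
  set P0 : ℂ := ∏ l, y₀ l ^ (Nshift c l) with hP0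
  have hP0ne : P0 ≠ 0 := Finset.prod_ne_zero_iff.mpr fun l _ => pow_ne_zero _ (hy₀ l)
  have hQ : Matrix.of (Qmat c y₀) = D * E * D := by
    ext i j
    rw [Matrix.of_apply, ← hess_entry c y₀ hy₀ hcrit i j]
    have hDE : (D * E * D) i j = y₀ i * E i j * y₀ j := by
      rw [Matrix.mul_diagonal, Matrix.diagonal_mul]
    rw [hDE, hE]
    rfl
  have h1 : Amat c y₀ * D = P0 • Matrix.of (Qmat c y₀) := by
    ext i j
    rw [Matrix.mul_diagonal]
    show (∑ k ∈ c.support, ((k i : ℤ) : ℂ) * (c k).coeff 0 * dgrad c y₀ k j) * y₀ j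
      = P0 • (Qmat c y₀ i j)
    rw [Finset.sum_mul]
    have hterm : ∀ k ∈ c.support,
        ((k i : ℤ) : ℂ) * (c k).coeff 0 * dgrad c y₀ k j * y₀ j
        = P0 * ((c k).coeff 0 * (k i : ℂ) * (k j : ℂ) * ∏ l, y₀ l ^ (k l))
          + (P0 * (Nshift c j : ℂ)) * ((c k).coeff 0 * (k i : ℂ) * ∏ l, y₀ l ^ (k l)) := by
      intro k hk
      have e1 : ((k i : ℤ) : ℂ) * (c k).coeff 0 * dgrad c y₀ k j * y₀ j
          = ((k i : ℤ) : ℂ) * (c k).coeff 0 * (dgrad c y₀ k j * y₀ j) := by ring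
      rw [e1, dgrad_mul c y₀ hy₀, prod_pow_eexp c y₀ hy₀ hk]
      have e2 : ((eexp c k j : ℕ) : ℂ) = ((k j : ℂ) + (Nshift c j : ℂ)) := by
        have := eexp_cast c hk j
        exact_mod_cast congrArg (fun z : ℤ => (z : ℂ)) this
      rw [e2]
      ring
    rw [Finset.sum_congr rfl hterm, Finset.sum_add_distrib, ← Finset.mul_sum, ← Finset.mul_sum]
    have hT1 : ∑ k ∈ c.support, (c k).coeff 0 * (k i : ℂ) * ∏ l, y₀ l ^ (k l) = 0 :=
      T1_eq c y₀ hy₀ hcrit i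
    rw [hT1, mul_zero, add_zero, smul_eq_mul, Qmat, Finset.mul_sum]
  have hdet1 : (Amat c y₀).det * D.det = P0 ^ m * ((D.det * E.det) * D.det) := by
    have := congrArg Matrix.det h1
    rw [Matrix.det_mul] at this
    rw [this, Matrix.det_smul, hQ, Matrix.det_mul, Matrix.det_mul]
    simp only [Fintype.card_fin]
  have hDdet : D.det ≠ 0 := by
    rw [hD, Matrix.det_diagonal]
    exact Finset.prod_ne_zero_iff.mpr fun l _ => hy₀ l
  intro hA
  rw [hA, zero_mul] at hdet1
  have : P0 ^ m * (D.det * E.det * D.det) ≠ 0 := by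
    refine mul_ne_zero (pow_ne_zero _ hP0ne) (mul_ne_zero (mul_ne_zero hDdet ?_) hDdet)
    exact hhess
  exact this hdet1.symm

end Amatrix

section Gmap

open Finset

variable {m : ℕ} (c : (Fin m →₀ ℤ) →₀ HahnSeries ℝ ℂ) (y₀ : Fin m → ℂ)
variable {M : Set ℝ} {ε ρ : ℝ}

/-- The critical point equation map, with cleared denominators. -/
noncomputable def Gmap (y : Fin m → KK) (i : Fin m) : KK :=
  ∑ k ∈ c.support, ((k i : ℤ) : KK) * c k * ∏ j, y j ^ (eexp c k j)

theorem intCast_eq_C (n : ℤ) : ((n : ℤ) : KK) = HahnSeries.C ((n : ℂ)) :=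
  (map_intCast (HahnSeries.C : ℂ →+* KK) n).symm

theorem sum_coeff {ι : Type*} (s : Finset ι) (f : ι → KK) (r : ℝ) :
    (∑ i ∈ s, f i).coeff r = ∑ i ∈ s, (f i).coeff r :=
  map_sum (HahnSeries.coeff.addMonoidHom r) f s

theorem C_coeff0 (z : ℂ) : (HahnSeries.C z : KK).coeff 0 = z := by
  rw [HahnSeries.C_apply, HahnSeries.coeff_single_same]

theorem C_coeff_neg (z : ℂ) (r : ℝ) (hr : r < 0) : (HahnSeries.C z : KK).coeff r = 0 := by
  rw [HahnSeries.C_apply, HahnSeries.coeff_single_of_ne (ne_of_lt hr)]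

theorem okIci {x : KK} (hx : ∀ r < (0:ℝ), x.coeff r = 0) : OkS (Set.Ici 0) 0 x :=
  ⟨fun t ht => Set.mem_Ici.mpr (supp_nonneg hx ht), hx⟩

theorem coeff_neg_mul {x y : KK} (hx : ∀ r < (0:ℝ), x.coeff r = 0)
    (hy : ∀ r < (0:ℝ), y.coeff r = 0) : ∀ r < (0:ℝ), (x * y).coeff r = 0 :=
  ((okIci hx).mul00 (fun _ ha => ha) (fun _ ha _ hb => Set.mem_Ici.mpr (add_nonneg (Set.mem_Ici.mp ha) (Set.mem_Ici.mp hb))) (okIci hy)).2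

theorem Gmap_ok0 (hM0 : M ⊆ Set.Ici 0) (hMadd : ∀ a ∈ M, ∀ b ∈ M, a + b ∈ M)
    (h0M : (0:ℝ) ∈ M) (hS : ∀ k ∈ c.support, OkS M 0 (c k))
    {y : Fin m → KK} (hy : ∀ j, OkS M 0 (y j)) (i : Fin m) :
    OkS M 0 (Gmap c y i) := by
  refine OkS.sum _ _ fun k hk => ?_
  exact ((OkS.intCast h0M _).mul00 hM0 hMadd (hS k hk)).mul00 hM0 hMadd
    (OkS.prod hM0 hMadd h0M _ _ fun j _ => (hy j).pow hM0 hMadd h0M _)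

theorem Gmap_y₀C_coeff0 (hy₀ : ∀ i, y₀ i ≠ 0)
    (hc : ∀ k, ∀ r < (0 : ℝ), (c k).coeff r = 0)
    (hcrit : ∀ i, deriv (fun t =>
      leadingPotential m c (Function.update y₀ i t)) (y₀ i) = 0) (i : Fin m) :
    (Gmap c (fun j => HahnSeries.C (y₀ j)) i).coeff 0 = 0 := by
  have hterm : ∀ k ∈ c.support,
      (((k i : ℤ) : KK) * c k * ∏ j, (HahnSeries.C (y₀ j)) ^ (eexp c k j)).coeff 0
      = (∏ l, y₀ l ^ (Nshift c l)) * ((c k).coeff 0 * (k i : ℂ) * ∏ l, y₀ l ^ (k l)) := by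
    intro k hk
    have hCprod : ∏ j, (HahnSeries.C (y₀ j) : KK) ^ (eexp c k j)
        = HahnSeries.C (∏ j, y₀ j ^ (eexp c k j)) := by
      rw [map_prod (HahnSeries.C : ℂ →+* KK) (fun j => y₀ j ^ (eexp c k j)) Finset.univ]
      exact Finset.prod_congr rfl fun j _ => (map_pow _ _ _).symm
    rw [hCprod, intCast_eq_C]
    rw [coeff_zero_mul (coeff_neg_mul (fun r hr => C_coeff_neg _ _ hr) (hc k))
      (fun r hr => C_coeff_neg _ _ hr)]
    rw [coeff_zero_mul (fun r hr => C_coeff_neg _ _ hr) (hc k), C_coeff0, C_coeff0,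
      prod_pow_eexp c y₀ hy₀ hk]
    ring
  rw [Gmap, sum_coeff, Finset.sum_congr rfl hterm, ← Finset.mul_sum,
    T1_eq c y₀ hy₀ hcrit i, mul_zero]

/-- Main expansion: linearization of `Gmap` around a point near `y₀`. -/
theorem Gmap_expand (hM0 : M ⊆ Set.Ici 0) (hMadd : ∀ a ∈ M, ∀ b ∈ M, a + b ∈ M)
    (h0M : (0:ℝ) ∈ M) (hS : ∀ k ∈ c.support, OkS M 0 (c k))
    (hεM : ∀ r ∈ M, r ≠ 0 → ε ≤ r) (hεpos : 0 < ε) (hρ : ε ≤ ρ)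
    {a δ : Fin m → KK} (ha : ∀ j, OkS M 0 (a j))
    (hay : ∀ j, OkS M ε (a j - HahnSeries.C (y₀ j)))
    (hδ : ∀ j, OkS M ρ (δ j)) (i : Fin m) :
    OkS M (ρ + ε) (Gmap c (fun j => a j + δ j) i - Gmap c a i
      - ∑ j, HahnSeries.C (Amat c y₀ i j) * δ j) := by
  have hρ0 : (0:ℝ) ≤ ρ := le_trans (le_of_lt hεpos) hρ
  have hε0 : (0:ℝ) ≤ ε := le_of_lt hεpos
  have hCy : ∀ j, OkS M 0 ((HahnSeries.C (y₀ j) : KK)) := fun j => OkS.C h0M _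
  -- rewrite the A-term as a double sum
  have hA : ∑ j, (HahnSeries.C (Amat c y₀ i j) : KK) * δ j
      = ∑ k ∈ c.support, ∑ j, (HahnSeries.C (((k i : ℤ) : ℂ) * (c k).coeff 0
          * dgrad c y₀ k j) : KK) * δ j := by
    rw [Finset.sum_comm]
    refine Finset.sum_congr rfl fun j _ => ?_
    rw [show Amat c y₀ i j = ∑ k ∈ c.support, ((k i : ℤ) : ℂ) * (c k).coeff 0 * dgrad c y₀ k j
        from rfl, map_sum, Finset.sum_mul]
  rw [hA, Gmap, Gmap, ← Finset.sum_sub_distrib, ← Finset.sum_sub_distrib]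
  refine OkS.sum _ _ fun k hk => ?_
  set E : Fin m → ℕ := eexp c k with hE
  set ak : ℂ := (c k).coeff 0 with hak
  set Err : KK := ∏ j, (a j + δ j) ^ (E j) - ∏ j, (a j) ^ (E j)
      - ∑ j, (E j : KK) * (a j) ^ (E j - 1) * δ j * ∏ l ∈ univ.erase j, (a l) ^ (E l)
    with hErrDef
  have hErr : OkS M (ρ + ρ) Err := prod_expand hM0 hMadd h0M hρ0 E ha hδ Finset.univ
  have h2 : ∀ j : Fin m,
      (HahnSeries.C (((k i : ℤ) : ℂ) * ak * dgrad c y₀ k j) : KK)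
      = ((k i : ℤ) : KK) * HahnSeries.C (ak * dgrad c y₀ k j) := by
    intro j
    rw [mul_assoc, map_mul, intCast_eq_C]
  have hgoal : ((k i : ℤ) : KK) * c k * ∏ j, (a j + δ j) ^ (E j)
        - ((k i : ℤ) : KK) * c k * ∏ j, (a j) ^ (E j)
        - ∑ j, (HahnSeries.C (((k i : ℤ) : ℂ) * ak * dgrad c y₀ k j) : KK) * δ j
      = ((k i : ℤ) : KK) * c k * Err
        + ∑ j, (((k i : ℤ) : KK) * (c k * ((E j : KK) * (a j) ^ (E j - 1)
              * ∏ l ∈ univ.erase j, (a l) ^ (E l))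
            - HahnSeries.C (ak * dgrad c y₀ k j))) * δ j := by
    simp only [h2]
    have expand : ∀ j : Fin m, ((k i : ℤ) : KK) * (c k * ((E j : KK) * (a j) ^ (E j - 1)
              * ∏ l ∈ univ.erase j, (a l) ^ (E l))
            - HahnSeries.C (ak * dgrad c y₀ k j)) * δ j
        = ((k i : ℤ) : KK) * c k *
            ((E j : KK) * (a j) ^ (E j - 1) * δ j * ∏ l ∈ univ.erase j, (a l) ^ (E l))
          - ((k i : ℤ) : KK) * HahnSeries.C (ak * dgrad c y₀ k j) * δ j := fun j => by ring
    rw [Finset.sum_congr rfl fun j _ => expand j, Finset.sum_sub_distrib, hErrDef, mul_sub,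
      mul_sub, Finset.mul_sum]
    ring
  rw [hgoal]
  refine OkS.add (((OkS.intCast h0M _).mul00 hM0 hMadd (hS k hk)).mul0l hM0 hMadd
    (by linarith) (hErr.mono (by linarith))) (OkS.sum _ _ fun j _ => ?_)
  -- per-j gradient comparison
  have hcd : OkS M ε (c k - HahnSeries.C ak) := by
    refine OkS.small hεM ((hS k hk).sub (OkS.C h0M _)) ?_
    rw [HahnSeries.coeff_sub, C_coeff0, hak, sub_self]
  have hCdgrad : (HahnSeries.C (dgrad c y₀ k j) : KK)
      = (E j : KK) * (HahnSeries.C (y₀ j)) ^ (E j - 1)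
        * ∏ l ∈ univ.erase j, (HahnSeries.C (y₀ l)) ^ (E l) := by
    rw [show dgrad c y₀ k j = (E j : ℂ) * y₀ j ^ (E j - 1)
        * ∏ l ∈ univ.erase j, y₀ l ^ (E l) from rfl]
    rw [map_mul, map_mul, map_natCast, map_pow,
      map_prod (HahnSeries.C : ℂ →+* KK) (fun l => y₀ l ^ (E l)) (univ.erase j)]
    congr 1
    exact Finset.prod_congr rfl fun l _ => map_pow _ _ _
  have hgd : OkS M ε ((E j : KK) * (a j) ^ (E j - 1)
        * ∏ l ∈ univ.erase j, (a l) ^ (E l) - HahnSeries.C (dgrad c y₀ k j)) := by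
    rw [hCdgrad]
    have hkey : (E j : KK) * (a j) ^ (E j - 1) * ∏ l ∈ univ.erase j, (a l) ^ (E l)
        - (E j : KK) * (HahnSeries.C (y₀ j)) ^ (E j - 1)
          * ∏ l ∈ univ.erase j, (HahnSeries.C (y₀ l)) ^ (E l)
      = (E j : KK) * ((a j) ^ (E j - 1) *
          (∏ l ∈ univ.erase j, (a l) ^ (E l) - ∏ l ∈ univ.erase j, (HahnSeries.C (y₀ l)) ^ (E l))
        + ((a j) ^ (E j - 1) - (HahnSeries.C (y₀ j)) ^ (E j - 1))
            * ∏ l ∈ univ.erase j, (HahnSeries.C (y₀ l)) ^ (E l)) := by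
      ring
    rw [hkey]
    refine (OkS.natCast h0M _).mul0l hM0 hMadd hε0 (OkS.add ?_ ?_)
    · refine ((ha j).pow hM0 hMadd h0M _).mul0l hM0 hMadd hε0 ?_
      exact prod_congr hM0 hMadd h0M hε0 (fun l => (ha l).pow hM0 hMadd h0M _)
        (fun l => (hCy l).pow hM0 hMadd h0M _)
        (fun l => pow_congr hM0 hMadd h0M hε0 (ha l) (hCy l) (hay l) _) _
    · refine OkS.mul0r hM0 hMadd hε0 ?_ (OkS.prod hM0 hMadd h0M _ _ fun l _ =>
        (hCy l).pow hM0 hMadd h0M _)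
      exact pow_congr hM0 hMadd h0M hε0 (ha j) (hCy j) (hay j) _
  have hfac : OkS M ε (c k * ((E j : KK) * (a j) ^ (E j - 1)
        * ∏ l ∈ univ.erase j, (a l) ^ (E l)) - HahnSeries.C (ak * dgrad c y₀ k j)) := by
    rw [map_mul]
    have hkey : c k * ((E j : KK) * (a j) ^ (E j - 1)
          * ∏ l ∈ univ.erase j, (a l) ^ (E l))
          - HahnSeries.C ak * HahnSeries.C (dgrad c y₀ k j)
        = c k * ((E j : KK) * (a j) ^ (E j - 1)
            * ∏ l ∈ univ.erase j, (a l) ^ (E l) - HahnSeries.C (dgrad c y₀ k j))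
          + (c k - HahnSeries.C ak) * HahnSeries.C (dgrad c y₀ k j) := by
      ring
    rw [hkey]
    exact ((hS k hk).mul0l hM0 hMadd hε0 hgd).add (hcd.mul0r hM0 hMadd hε0 (OkS.C h0M _))
  have h9 := ((OkS.intCast h0M ((k i : ℤ))).mul0l hM0 hMadd hε0 hfac).mul hM0 hMadd
    hε0 hρ0 (hδ j)
  have heq : ε + ρ = ρ + ε := add_comm ε ρ
  rw [heq] at h9
  exact h9

end Gmap

section Picard

open Finset

variable {m : ℕ} (c : (Fin m →₀ ℤ) →₀ HahnSeries ℝ ℂ) (y₀ : Fin m → ℂ)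
variable {M : Set ℝ} {ε : ℝ}

/-- Picard iteration for the critical point equation. -/
noncomputable def picard : ℕ → Fin m → KK
  | 0 => fun j => HahnSeries.C (y₀ j)
  | n+1 => fun j => picard n j
      + -∑ l, HahnSeries.C ((Amat c y₀)⁻¹ j l) * Gmap c (picard n) l

theorem picard_spec (hM0 : M ⊆ Set.Ici 0) (hMadd : ∀ a ∈ M, ∀ b ∈ M, a + b ∈ M)
    (h0M : (0:ℝ) ∈ M) (hS : ∀ k ∈ c.support, OkS M 0 (c k))
    (hεM : ∀ r ∈ M, r ≠ 0 → ε ≤ r) (hεpos : 0 < ε)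
    (hy₀ : ∀ i, y₀ i ≠ 0) (hc : ∀ k, ∀ r < (0 : ℝ), (c k).coeff r = 0)
    (hcrit : ∀ i, deriv (fun t =>
      leadingPotential m c (Function.update y₀ i t)) (y₀ i) = 0)
    (hdet : (Amat c y₀).det ≠ 0) :
    ∀ n, (∀ j, OkS M 0 (picard c y₀ n j))
      ∧ (∀ j, OkS M ε (picard c y₀ n j - HahnSeries.C (y₀ j)))
      ∧ (∀ i, OkS M (((n : ℝ) + 1) * ε) (Gmap c (picard c y₀ n) i)) := by
  have hAB : Amat c y₀ * (Amat c y₀)⁻¹ = 1 :=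
    Matrix.mul_nonsing_inv _ (isUnit_iff_ne_zero.mpr hdet)
  intro n
  induction n with
  | zero =>
    refine ⟨fun j => OkS.C h0M _, fun j => ?_, fun i => ?_⟩
    · rw [show picard c y₀ 0 j = HahnSeries.C (y₀ j) from rfl, sub_self]; exact OkS.zero ε
    · have h1 : OkS M ε (Gmap c (picard c y₀ 0) i) := by
        rw [show picard c y₀ 0 = fun j => HahnSeries.C (y₀ j) from rfl]
        refine OkS.small hεM (Gmap_ok0 c hM0 hMadd h0M hS (fun j => OkS.C h0M _) i) ?_
        exact Gmap_y₀C_coeff0 c y₀ hy₀ hc hcrit i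
      have : (((0:ℕ) : ℝ) + 1) * ε = ε := by norm_num
      rw [this]
      exact h1
  | succ n ih =>
    obtain ⟨h1, h2, h3⟩ := ih
    set ρn : ℝ := ((n : ℝ) + 1) * ε with hρn_def
    have hρn : ε ≤ ρn := by
      have : (0:ℝ) ≤ (n : ℝ) := Nat.cast_nonneg n
      nlinarith
    have hρn0 : (0:ℝ) ≤ ρn := le_trans (le_of_lt hεpos) hρn
    set δ : Fin m → KK := fun j =>
      -∑ l, HahnSeries.C ((Amat c y₀)⁻¹ j l) * Gmap c (picard c y₀ n) l with hδ_def
    have hδ : ∀ j, OkS M ρn (δ j) := fun j =>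
      (OkS.sum _ _ fun l _ => (OkS.C h0M _).mul0l hM0 hMadd hρn0 (h3 l)).neg
    have hstep : picard c y₀ (n+1) = fun j => picard c y₀ n j + δ j := rfl
    have hnext0 : ∀ j, OkS M 0 (picard c y₀ (n+1) j) := by
      intro j
      rw [hstep]
      exact (h1 j).add ((hδ j).mono hρn0)
    refine ⟨hnext0, fun j => ?_, fun i => ?_⟩
    · have e : picard c y₀ (n+1) j - HahnSeries.C (y₀ j)
          = (picard c y₀ n j - HahnSeries.C (y₀ j)) + δ j := by
        rw [hstep]; ring
      rw [e]
      exact (h2 j).add ((hδ j).mono hρn)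
    · have hexp := Gmap_expand c y₀ hM0 hMadd h0M hS hεM hεpos hρn h1 h2 hδ i
      have hlin : ∑ j, (HahnSeries.C (Amat c y₀ i j) : KK) * δ j
          = - Gmap c (picard c y₀ n) i := by
        have e1 : ∀ j, (HahnSeries.C (Amat c y₀ i j) : KK) * δ j
            = -∑ l, HahnSeries.C (Amat c y₀ i j * (Amat c y₀)⁻¹ j l)
                * Gmap c (picard c y₀ n) l := by
          intro j
          rw [hδ_def, mul_neg, Finset.mul_sum]
          congr 1
          exact Finset.sum_congr rfl fun l _ => by rw [map_mul, mul_assoc]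
        rw [Finset.sum_congr rfl fun j _ => e1 j, Finset.sum_neg_distrib, neg_inj]
        rw [Finset.sum_comm]
        have e2 : ∀ l, ∑ j, HahnSeries.C (Amat c y₀ i j * (Amat c y₀)⁻¹ j l)
              * Gmap c (picard c y₀ n) l
            = (HahnSeries.C ((Amat c y₀ * (Amat c y₀)⁻¹) i l) : KK)
                * Gmap c (picard c y₀ n) l := by
          intro l
          rw [← Finset.sum_mul, ← map_sum, Matrix.mul_apply]
        rw [Finset.sum_congr rfl fun l _ => e2 l, hAB]
        rw [Finset.sum_eq_single i]
        · rw [Matrix.one_apply_eq, map_one, one_mul]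
        · intro l _ hl
          rw [Matrix.one_apply_ne (fun h => hl h.symm), map_zero, zero_mul]
        · intro h
          exact absurd (Finset.mem_univ i) h
      have efin : Gmap c (picard c y₀ (n+1)) i
          = Gmap c (fun j => picard c y₀ n j + δ j) i - Gmap c (picard c y₀ n) i
            - ∑ j, (HahnSeries.C (Amat c y₀ i j) : KK) * δ j := by
        rw [hlin, hstep]
        ring
      have ecast : (((n+1 : ℕ) : ℝ) + 1) * ε = ρn + ε := by
        rw [hρn_def]; push_cast; ring
      rw [efin, ecast]
      exact hexp

end Picard

/-- Formal implicit function theorem: a nondegenerate critical point `y₀ ∈ (ℂ∖{0})^m` of the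
leading-order part `W₀` of a Laurent polynomial `W` over `Λ_{≥0}` deforms to a critical point
`y` of `W` with `yᵢ − (y₀)ᵢ` of positive valuation. (The critical point equation is stated
after clearing the denominator `yᵢ`, which is a unit.) -/
theorem formal_implicit_function_theorem (m : ℕ)
    (c : (Fin m →₀ ℤ) →₀ HahnSeries ℝ ℂ)
    (hc : ∀ k, ∀ r < (0 : ℝ), (c k).coeff r = 0)
    (y₀ : Fin m → ℂ) (hy₀ : ∀ i, y₀ i ≠ 0)
    (hcrit : ∀ i, deriv (fun t => leadingPotential m c (Function.update y₀ i t)) (y₀ i) = 0)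
    (hhess : (Matrix.of fun i j : Fin m =>
        deriv (fun s => deriv (fun t =>
            leadingPotential m c (Function.update (Function.update y₀ i s) j t))
          (Function.update y₀ i s j)) (y₀ i)).det ≠ 0) :
    ∃ y : Fin m → HahnSeries ℝ ℂ,
      (∀ i, ∀ r ≤ (0 : ℝ), (y i - HahnSeries.C (y₀ i)).coeff r = 0) ∧
      ∀ i, (c.sum fun k a =>
        ((k i : ℤ) : HahnSeries ℝ ℂ) * a * ∏ j, y j ^ (k j)) = 0 := by

  classical
  set U : Set ℝ := ⋃ k ∈ (c.support : Set (Fin m →₀ ℤ)), ((c k).support : Set ℝ) with hU_def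
  have hU0 : ∀ x ∈ U, 0 ≤ x := by
    intro x hx
    rw [hU_def] at hx
    simp only [Set.mem_iUnion] at hx
    obtain ⟨k, _, hk⟩ := hx
    exact supp_nonneg (hc k) hk
  have hUpwo : U.IsPWO := by
    rw [hU_def]
    exact (Finset.isPWO_bUnion c.support).mpr fun k _ => (c k).isWF_support.isPWO
  set M : Set ℝ := ((AddSubmonoid.closure U : AddSubmonoid ℝ) : Set ℝ) with hM_def
  have hM0 : M ⊆ Set.Ici 0 := by
    intro x hx
    rw [hM_def] at hx
    refine AddSubmonoid.closure_induction (fun y hy => hU0 y hy) (le_refl (0:ℝ))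
      (fun a b _ _ ha hb => Set.mem_Ici.mpr (add_nonneg (Set.mem_Ici.mp ha) (Set.mem_Ici.mp hb))) hx
  have hMadd : ∀ a ∈ M, ∀ b ∈ M, a + b ∈ M := fun a ha b hb => AddSubmonoid.add_mem _ ha hb
  have h0M : (0:ℝ) ∈ M := AddSubmonoid.zero_mem _
  have hMpwo : M.IsPWO := Set.IsPWO.addSubmonoid_closure hU0 hUpwo
  have hS : ∀ k ∈ c.support, OkS M 0 (c k) := by
    intro k hk
    exact ⟨fun x hx => AddSubmonoid.subset_closure (Set.mem_biUnion hk hx), hc k⟩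
  obtain ⟨ε, hεpos, hεM⟩ : ∃ ε : ℝ, 0 < ε ∧ ∀ r ∈ M, r ≠ 0 → ε ≤ r := by
    by_cases hT : (M ∩ Set.Ioi 0).Nonempty
    · have hWF : (M ∩ Set.Ioi 0).IsWF := (hMpwo.mono Set.inter_subset_left).isWF
      refine ⟨hWF.min hT, (hWF.min_mem hT).2, fun r hr hr0 => hWF.min_le hT ⟨hr, ?_⟩⟩
      exact lt_of_le_of_ne (hM0 hr) (Ne.symm hr0)
    · refine ⟨1, one_pos, fun r hr hr0 => ?_⟩
      exact absurd (⟨r, hr, lt_of_le_of_ne (hM0 hr) (Ne.symm hr0)⟩ :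
        (M ∩ Set.Ioi 0).Nonempty) hT
  have hε0 : (0:ℝ) ≤ ε := le_of_lt hεpos
  have hdet := detAmat_ne c y₀ hy₀ hcrit hhess
  have hspec := picard_spec c y₀ hM0 hMadd h0M hS hεM hεpos hy₀ hc hcrit hdet
  have hn1pos : ∀ n : ℕ, (0:ℝ) ≤ ((n:ℝ)+1)*ε := by
    intro n
    have : (0:ℝ) ≤ (n:ℝ) := Nat.cast_nonneg n
    nlinarith
  have hn1ε : ∀ n : ℕ, ε ≤ ((n:ℝ)+1)*ε := by
    intro n
    have : (0:ℝ) ≤ (n:ℝ) := Nat.cast_nonneg n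
    nlinarith
  have hdiff : ∀ (n : ℕ) (j : Fin m), OkS M (((n:ℝ)+1)*ε) (picard c y₀ (n+1) j - picard c y₀ n j) := by
    intro n j
    have e : picard c y₀ (n+1) j - picard c y₀ n j
        = -∑ l, HahnSeries.C ((Amat c y₀)⁻¹ j l) * Gmap c (picard c y₀ n) l := by
      rw [show picard c y₀ (n+1) j = picard c y₀ n j
        + -∑ l, HahnSeries.C ((Amat c y₀)⁻¹ j l) * Gmap c (picard c y₀ n) l from rfl]
      ring
    rw [e]
    exact (OkS.sum _ _ fun l _ =>
      (OkS.C h0M _).mul0l hM0 hMadd (hn1pos n) ((hspec n).2.2 l)).neg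
  set S : Fin m → HahnSeries.SummableFamily ℝ ℂ ℕ := fun j =>
    { toFun := fun n => picard c y₀ (n+1) j - picard c y₀ n j
      isPWO_iUnion_support' := hMpwo.mono (Set.iUnion_subset fun n => (hdiff n j).1)
      finite_co_support' := fun g => by
        refine Set.Finite.subset (Finset.range (⌈g / ε⌉₊ + 1)).finite_toSet ?_
        intro n hn
        simp only [Set.mem_setOf_eq] at hn
        have h1 : ((n:ℝ)+1)*ε ≤ g := le_of_not_gt fun h => hn ((hdiff n j).2 g h)
        have h2 : (n:ℝ) < g / ε := by
          rw [lt_div_iff₀ hεpos]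
          nlinarith
        simp only [Finset.coe_range, Set.mem_Iio]
        have := Nat.lt_ceil.mpr h2
        omega } with hS_def
  have hScoe : ∀ (j : Fin m) (n : ℕ), (S j) n = picard c y₀ (n+1) j - picard c y₀ n j := fun j n => rfl
  set y : Fin m → KK := fun j => HahnSeries.C (y₀ j) + (S j).hsum with hy_def
  have hpartial : ∀ (n : ℕ) (j : Fin m), picard c y₀ n j
      = HahnSeries.C (y₀ j) + ∑ k ∈ Finset.range n, (S j) k := by
    intro n j
    induction n with
    | zero => rw [show picard c y₀ 0 j = HahnSeries.C (y₀ j) from rfl]; simp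
    | succ n ih =>
      rw [Finset.sum_range_succ, ← add_assoc, ← ih, hScoe]
      ring
  have htail : ∀ (n : ℕ) (j : Fin m), OkS M (((n:ℝ)+1)*ε) (y j - picard c y₀ n j) := by
    intro n j
    have e : y j - picard c y₀ n j = (S j).hsum - ∑ k ∈ Finset.range n, (S j) k := by
      rw [hy_def, hpartial n j]
      ring
    rw [e]
    constructor
    · intro r hr
      rw [HahnSeries.mem_support, HahnSeries.coeff_sub] at hr
      by_contra hrM
      apply hr
      have hall : ∀ k : ℕ, ((S j) k).coeff r = 0 := by
        intro k
        by_contra hco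
        exact hrM ((hdiff k j).1 hco)
      rw [HahnSeries.SummableFamily.coeff_hsum, finsum_eq_zero_of_forall_eq_zero hall,
        sum_coeff, Finset.sum_eq_zero fun k _ => hall k, sub_self]
    · intro r hr
      have hsupp : (Function.support fun k : ℕ => ((S j) k).coeff r)
          ⊆ ↑(Finset.range n) := by
        intro k hk
        simp only [Function.mem_support] at hk
        have h1 : ((k:ℝ)+1)*ε ≤ r := le_of_not_gt fun h => hk ((hdiff k j).2 r h)
        simp only [Finset.coe_range, Set.mem_Iio]
        by_contra hkn
        push_neg at hkn
        have : ((n:ℝ)+1)*ε ≤ ((k:ℝ)+1)*ε := by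
          have : (n:ℝ) ≤ (k:ℝ) := Nat.cast_le.mpr hkn
          nlinarith
        linarith
      rw [HahnSeries.coeff_sub, HahnSeries.SummableFamily.coeff_hsum,
        finsum_eq_sum_of_support_subset _ hsupp, sum_coeff, sub_self]
  have hcl1 : ∀ j, OkS M ε (y j - HahnSeries.C (y₀ j)) := by
    intro j
    have h := htail 0 j
    rw [show picard c y₀ 0 j = HahnSeries.C (y₀ j) from rfl] at h
    refine h.mono ?_
    norm_num
  have hyok0 : ∀ j, OkS M 0 (y j) := by
    intro j
    have e : y j = HahnSeries.C (y₀ j) + (y j - HahnSeries.C (y₀ j)) := by ring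
    rw [e]
    exact (OkS.C h0M _).add ((hcl1 j).mono hε0)
  have hGy : ∀ i, Gmap c y i = 0 := by
    intro i
    refine OkS.eq_zero_of_forall fun ρ => ?_
    obtain ⟨n, hn⟩ := exists_nat_gt (ρ / ε)
    refine ⟨((n:ℝ)+1)*ε, ?_, ?_⟩
    · rw [div_lt_iff₀ hεpos] at hn
      nlinarith
    · obtain ⟨h1, h2, h3⟩ := hspec n
      have hexp := Gmap_expand c y₀ hM0 hMadd h0M hS hεM hεpos (hn1ε n) h1 h2
        (fun j => htail n j) i
      have efun : (fun j => picard c y₀ n j + (y j - picard c y₀ n j)) = y := by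
        funext j
        ring
      rw [efun] at hexp
      have hlin : OkS M (((n:ℝ)+1)*ε)
          (∑ j, HahnSeries.C (Amat c y₀ i j) * (y j - picard c y₀ n j)) :=
        OkS.sum _ _ fun j _ => (OkS.C h0M _).mul0l hM0 hMadd (hn1pos n) (htail n j)
      have htot : Gmap c y i
          = (Gmap c y i - Gmap c (picard c y₀ n) i
              - ∑ j, HahnSeries.C (Amat c y₀ i j) * (y j - picard c y₀ n j))
            + ∑ j, HahnSeries.C (Amat c y₀ i j) * (y j - picard c y₀ n j)
            + Gmap c (picard c y₀ n) i := by
        ring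
      have hOk : OkS M (((n:ℝ)+1)*ε) (Gmap c y i) := by
        rw [htot]
        refine ((hexp.mono ?_).add hlin).add (h3 i)
        nlinarith
      exact hOk.2
  have hyne : ∀ j, y j ≠ 0 := by
    intro j hj
    have h0 : (y j).coeff 0 = y₀ j := by
      have e : y j = HahnSeries.C (y₀ j) + (y j - HahnSeries.C (y₀ j)) := by ring
      rw [e, HahnSeries.coeff_add, C_coeff0, (hcl1 j).2 0 hεpos, add_zero]
    rw [hj] at h0
    exact hy₀ j (by simpa using h0.symm)
  refine ⟨y, fun i r hr => (hcl1 i).2 r (lt_of_le_of_lt hr hεpos), fun i => ?_⟩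
  rw [Finsupp.sum]
  set u : KK := ∏ j, y j ^ ((Nshift c j : ℤ)) with hu
  have hune : ∀ j, y j ^ ((Nshift c j : ℤ)) ≠ 0 := fun j => zpow_ne_zero _ (hyne j)
  have hprod : ∀ k ∈ c.support, ∏ j, y j ^ (k j) = u⁻¹ * ∏ j, y j ^ (eexp c k j) := by
    intro k hk
    rw [hu, ← Finset.prod_inv_distrib, ← Finset.prod_mul_distrib]
    refine Finset.prod_congr rfl fun j _ => ?_
    have e1 : y j ^ (eexp c k j) = y j ^ ((eexp c k j : ℤ)) := (zpow_natCast _ _).symm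
    rw [e1, eexp_cast c hk j, zpow_add₀ (hyne j)]
    rw [mul_comm (y j ^ (k j)) _, ← mul_assoc, inv_mul_cancel₀ (hune j), one_mul]
  have hterm : ∀ k ∈ c.support, ((k i : ℤ) : KK) * c k * ∏ j, y j ^ (k j)
      = u⁻¹ * (((k i : ℤ) : KK) * c k * ∏ j, y j ^ (eexp c k j)) := by
    intro k hk
    rw [hprod k hk]
    ring
  rw [Finset.sum_congr rfl hterm, ← Finset.mul_sum,
    show ∑ k ∈ c.support, ((k i : ℤ) : KK) * c k * ∏ j, y j ^ (eexp c k j)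
      = Gmap c y i from rfl, hGy i, mul_zero]
end

section
/- Let Λ_{≥0} be the Hahn series ring over ℂ with value group ℝ and support in [0,∞), and let A = ⊕_{d=d₋}^{d₊} A^d be a ℤ-graded free Λ_{≥0}-module of finite rank with grading supported in an interval [d₋,d₊]. Suppose given Λ_{≥0}-multilinear maps μ^{n,m} : A^{⊗n} → A for n ≥ 0, m ∈ ℤ, each homogeneous of degree 2 − n + m, such that μ^{n,m}(A^{⊗n}) ⊆ q^{E_m}·A for a sequence of reals with E_m → ∞ as m → ∞, and set μⁿ = ∑_m μ^{n,m} (a finite sum on each multidegree). Let b = b₀ + q^E·b₁ with b₀ ∈ ⊕_{d≤0} A^d, b₁ ∈ A and E > 0. Then the family (μⁿ(b,…,b))_{n≥0} is summable: for every c ∈ ℝ, one has μⁿ(b,…,b) ∈ q^c·A for all but finitely many n. -/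
open scoped NNReal

open Finset

/-!
Write `b = b₀ + q^E b₁` and expand `μ^{n,m}(b, …, b)` multilinearly as a sum over the sets `s` of
slots filled with `q^E b₁`; the term of `s` is `q^{|s| E} μ^{n,m}(…)`. Once `|s| E ≥ c` it lies in
`q^c A`. Otherwise split every argument into homogeneous components: the slots outside `s` carry
`b₀`, of nonpositive degree, so the input degrees add up to at most `|s| · max d₊ 0`, and a nonzero
output component of degree `≥ d₋` forces `m ≥ d₋ - 2 + n - |s| · max d₊ 0`. For `n` large this
makes `E_m ≥ c`, uniformly in `m`.
-/

section QPowSubmodule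

variable {Γ R : Type*} [AddCommMonoid Γ] [LinearOrder Γ] [IsOrderedCancelAddMonoid Γ]
  [CanonicallyOrderedAdd Γ] [Semiring R] (ι : Type*)

def qPowSubmodule (c : Γ) : Submodule (HahnSeries Γ R) (ι → HahnSeries Γ R) where
  carrier := {x | ∀ i, (c : WithTop Γ) ≤ (x i).orderTop}
  zero_mem' _ := by simp
  add_mem' hx hy i := (le_min (hx i) (hy i)).trans HahnSeries.min_orderTop_le_orderTop_add
  smul_mem' y x hx i :=
    calc (c : WithTop Γ) = 0 + c := (zero_add _).symm
      _ ≤ y.orderTop + (x i).orderTop := add_le_add zero_le (hx i)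
      _ ≤ _ := HahnSeries.orderTop_add_le_mul

variable {ι}

theorem mem_qPowSubmodule_iff_coeff {c : Γ} {x : ι → HahnSeries Γ R} :
    x ∈ qPowSubmodule ι c ↔ ∀ i, ∀ r < c, (x i).coeff r = 0 := by
  simp only [qPowSubmodule, Submodule.mem_mk, AddSubmonoid.mem_mk, AddSubsemigroup.mem_mk,
    Set.mem_ofPred_eq, HahnSeries.le_orderTop_iff_forall, WithTop.coe_lt_coe]

theorem qPowSubmodule_antitone : Antitone (qPowSubmodule (R := R) ι : Γ → _) :=
  fun _ _ hc _ hx i => (WithTop.coe_le_coe.2 hc).trans (hx i)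

theorem single_smul_mem_qPowSubmodule (e : Γ) (x : ι → HahnSeries Γ R) :
    HahnSeries.single e (1 : R) • x ∈ qPowSubmodule ι e := fun i =>
  calc (e : WithTop Γ) = e + 0 := (add_zero _).symm
    _ ≤ (HahnSeries.single e (1 : R)).orderTop + (x i).orderTop :=
      add_le_add HahnSeries.orderTop_single_le zero_le
    _ ≤ _ := HahnSeries.orderTop_add_le_mul

end QPowSubmodule

theorem MultilinearMap.map_const_add_smul {R ι M N : Type*} [CommSemiring R] [AddCommMonoid M]
    [Module R M] [AddCommMonoid N] [Module R N] [DecidableEq ι] [Fintype ι]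
    (f : MultilinearMap R (fun _ : ι => M) N) (x y : M) (t : R) :
    f (fun _ => x + t • y) =
      ∑ s : Finset ι, t ^ s.card • f (s.piecewise (fun _ => y) (fun _ => x)) := by
  have hsplit : (fun _ : ι => x + t • y) = (fun _ => t • y) + fun _ => x :=
    funext fun _ => add_comm _ _
  rw [hsplit, f.map_add_univ]
  refine sum_congr rfl fun s _ => ?_
  rw [← prod_const, ← f.map_piecewise_smul]
  congr 1
  ext l
  by_cases hl : l ∈ s <;> simp [hl]

section Graded

variable {ι M : Type*} [AddCommMonoid M] (deg : ι → ℤ)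

def IsHomogeneous (d : ℤ) (x : ι → M) : Prop := ∀ i, deg i ≠ d → x i = 0

def gradedPart (d : ℤ) (x : ι → M) : ι → M := fun i => if deg i = d then x i else 0

def IsAInfinityGraded {R : Type*} [CommSemiring R] [Module R M]
    (μ : (n : ℕ) → ℤ → MultilinearMap R (fun _ : Fin n => ι → M) (ι → M)) : Prop :=
  ∀ n m a (d : Fin n → ℤ), (∀ l, IsHomogeneous deg (d l) (a l)) →
    IsHomogeneous deg (∑ l, d l + 2 - n + m) (μ n m a)

variable {deg}

theorem IsHomogeneous.eq_zero_of_lt {d dlo : ℤ} {x : ι → M} (hx : IsHomogeneous deg d x)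
    (hdlo : ∀ i, dlo ≤ deg i) (hd : d < dlo) : x = 0 :=
  funext fun i => hx i fun h => (hd.trans_le (h ▸ hdlo i)).false

theorem isHomogeneous_gradedPart (d : ℤ) (x : ι → M) : IsHomogeneous deg d (gradedPart deg d x) :=
  fun _ h => if_neg h

theorem gradedPart_eq_zero {d : ℤ} {x : ι → M} (hx : ∀ i, deg i = d → x i = 0) :
    gradedPart deg d x = 0 :=
  funext fun i => by by_cases h : deg i = d <;> simp [gradedPart, h, hx]

theorem sum_gradedPart {dlo dhi : ℤ} (hdeg : ∀ i, dlo ≤ deg i ∧ deg i ≤ dhi) (x : ι → M) :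
    ∑ d ∈ Icc dlo dhi, gradedPart deg d x = x := by
  ext i
  simp [gradedPart, Finset.sum_apply, hdeg i]

theorem MultilinearMap.map_eq_sum_gradedPart {R : Type*} [CommSemiring R] [Module R M] {n : ℕ}
    {N : Type*} [AddCommMonoid N] [Module R N] (f : MultilinearMap R (fun _ : Fin n => ι → M) N)
    {dlo dhi : ℤ} (hdeg : ∀ i, dlo ≤ deg i ∧ deg i ≤ dhi) (a : Fin n → ι → M) :
    f a = ∑ d ∈ Fintype.piFinset fun _ => Icc dlo dhi, f fun l => gradedPart deg (d l) (a l) := by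
  conv_lhs => rw [← funext fun l => sum_gradedPart hdeg (a l)]
  exact f.map_sum_finset _ _

end Graded

theorem sum_le_card_mul_of_nonpos_compl {α : Type*} [Fintype α] [DecidableEq α] (s : Finset α)
    {d : α → ℤ} {D : ℤ} (hD : ∀ l, d l ≤ D) (hcompl : ∀ l ∉ s, d l ≤ 0) :
    ∑ l, d l ≤ s.card * D := by
  rw [← sum_add_sum_compl s d]
  have hs : ∑ l ∈ s, d l ≤ ∑ _l ∈ s, D := sum_le_sum fun l _ => hD l
  have hsc : ∑ l ∈ sᶜ, d l ≤ 0 := sum_nonpos fun l hl => hcompl l (mem_compl.1 hl)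
  rw [sum_const, nsmul_eq_mul] at hs
  linarith

section Curvature

variable {Γ R : Type*} [AddCommMonoid Γ] [LinearOrder Γ] [IsOrderedCancelAddMonoid Γ]
  [CanonicallyOrderedAdd Γ] [CommSemiring R] {ι : Type*} {deg : ι → ℤ} {dlo dhi : ℤ}
  {μ : (n : ℕ) → ℤ → MultilinearMap (HahnSeries Γ R)
    (fun _ : Fin n => ι → HahnSeries Γ R) (ι → HahnSeries Γ R)}
  {E : ℤ → Γ} {c : Γ} {M : ℤ}

theorem map_homogeneous_mem_qPowSubmodule (hdlo : ∀ i, dlo ≤ deg i)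
    (hμ : IsAInfinityGraded deg μ)
    (hval : ∀ n m a, μ n m a ∈ qPowSubmodule ι (E m)) (hM : ∀ m ≥ M, c ≤ E m)
    {n : ℕ} (m : ℤ) {a : Fin n → ι → HahnSeries Γ R} {d : Fin n → ℤ}
    (ha : ∀ l, IsHomogeneous deg (d l) (a l)) (hn : M + 2 - dlo + ∑ l, d l ≤ n) :
    μ n m a ∈ qPowSubmodule ι c := by
  by_cases hm : M ≤ m
  · exact qPowSubmodule_antitone (hM m hm) (hval n m a)
  · rw [(hμ n m a d ha).eq_zero_of_lt hdlo (by omega)]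
    exact zero_mem _

theorem map_piecewise_mem_qPowSubmodule (hdeg : ∀ i, dlo ≤ deg i ∧ deg i ≤ dhi)
    (hμ : IsAInfinityGraded deg μ)
    (hval : ∀ n m a, μ n m a ∈ qPowSubmodule ι (E m)) (hM : ∀ m ≥ M, c ≤ E m)
    {b₀ : ι → HahnSeries Γ R} (hb₀ : ∀ i, 0 < deg i → b₀ i = 0) (b₁ : ι → HahnSeries Γ R)
    {K n : ℕ} (hn : M + 2 - dlo + K * max dhi 0 ≤ n) {s : Finset (Fin n)} (hs : s.card ≤ K)
    (m : ℤ) : μ n m (s.piecewise (fun _ => b₁) (fun _ => b₀)) ∈ qPowSubmodule ι c := by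
  rw [(μ n m).map_eq_sum_gradedPart hdeg]
  refine Submodule.sum_mem _ fun d hd => ?_
  by_cases hcompl : ∀ l ∉ s, d l ≤ 0
  · have hle : ∀ l, d l ≤ max dhi 0 := fun l =>
      ((mem_Icc.1 (Fintype.mem_piFinset.1 hd l)).2).trans (le_max_left _ _)
    have hsum := sum_le_card_mul_of_nonpos_compl s hle hcompl
    have hcard : (s.card : ℤ) * max dhi 0 ≤ K * max dhi 0 :=
      mul_le_mul_of_nonneg_right (by exact_mod_cast hs) (le_max_right _ _)
    exact map_homogeneous_mem_qPowSubmodule (fun i => (hdeg i).1) hμ hval hM m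
      (fun l => isHomogeneous_gradedPart _ _) (by linarith)
  · push Not at hcompl
    obtain ⟨l, hl, hdl⟩ := hcompl
    have hzero : gradedPart deg (d l) (s.piecewise (fun _ => b₁) (fun _ => b₀) l) = 0 := by
      rw [s.piecewise_eq_of_notMem _ _ hl]
      exact gradedPart_eq_zero fun i hi => hb₀ i (hi ▸ hdl)
    rw [(μ n m).map_coord_zero l hzero]
    exact zero_mem _

theorem map_const_add_single_smul_mem_qPowSubmodule (hdeg : ∀ i, dlo ≤ deg i ∧ deg i ≤ dhi)
    (hμ : IsAInfinityGraded deg μ)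
    (hval : ∀ n m a, μ n m a ∈ qPowSubmodule ι (E m)) (hM : ∀ m ≥ M, c ≤ E m)
    {b₀ : ι → HahnSeries Γ R} (hb₀ : ∀ i, 0 < deg i → b₀ i = 0) (b₁ : ι → HahnSeries Γ R)
    {Eb : Γ} {K n : ℕ} (hK : c ≤ K • Eb) (hn : M + 2 - dlo + K * max dhi 0 ≤ n) (m : ℤ) :
    μ n m (fun _ => b₀ + HahnSeries.single Eb (1 : R) • b₁) ∈ qPowSubmodule ι c := by
  classical
  rw [(μ n m).map_const_add_smul]
  refine Submodule.sum_mem _ fun s _ => ?_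
  rw [HahnSeries.single_pow, one_pow]
  rcases le_or_gt K s.card with hs | hs
  · exact qPowSubmodule_antitone (hK.trans (nsmul_le_nsmul_left zero_le hs))
      (single_smul_mem_qPowSubmodule _ _)
  · exact Submodule.smul_mem _ _
      (map_piecewise_mem_qPowSubmodule hdeg hμ hval hM hb₀ b₁ hn hs.le m)

end Curvature

theorem convergent_curvature_summable_general (ι : Type*)
    (deg : ι → ℤ) (dlo dhi : ℤ) (hdeg : ∀ i, dlo ≤ deg i ∧ deg i ≤ dhi)
    (μ : (n : ℕ) → ℤ → MultilinearMap (HahnSeries ℝ≥0 ℂ)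
        (fun _ : Fin n => (ι → HahnSeries ℝ≥0 ℂ)) (ι → HahnSeries ℝ≥0 ℂ))
    (hhom : ∀ (n : ℕ) (m : ℤ) (a : Fin n → (ι → HahnSeries ℝ≥0 ℂ)) (d : Fin n → ℤ),
        (∀ l i, deg i ≠ d l → a l i = 0) →
        ∀ i, deg i ≠ (∑ l, d l) + 2 - (n : ℤ) + m → μ n m a i = 0)
    (E : ℤ → ℝ≥0) (hE : Filter.Tendsto E Filter.atTop Filter.atTop)
    (hval : ∀ (n : ℕ) (m : ℤ) (a : Fin n → (ι → HahnSeries ℝ≥0 ℂ)) (i : ι),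
        ∀ r : ℝ≥0, r < E m → (μ n m a i).coeff r = 0)
    (b₀ b₁ : ι → HahnSeries ℝ≥0 ℂ) (hb₀ : ∀ i, 0 < deg i → b₀ i = 0)
    (Eb : ℝ≥0) (hEb : 0 < Eb) :
    ∀ c : ℝ,
      {n : ℕ | ¬ ∀ (i : ι) (r : ℝ≥0), (r : ℝ) < c →
          ((∑ᶠ m : ℤ,
              μ n m (fun _ => b₀ + (HahnSeries.single Eb (1 : ℂ)) • b₁)) i).coeff r = 0}.Finite := by
  intro c
  obtain ⟨K, hK⟩ := Archimedean.arch c.toNNReal hEb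
  obtain ⟨M, hM⟩ := Filter.eventually_atTop.1 (hE.eventually_ge_atTop c.toNNReal)
  have hval' : ∀ n m a, μ n m a ∈ qPowSubmodule ι (E m) := fun n m a =>
    mem_qPowSubmodule_iff_coeff.2 (hval n m a)
  refine (Set.finite_Iio (M + 2 - dlo + K * max dhi 0).toNat).subset fun n hn => ?_
  rw [Set.mem_Iio]
  by_contra! hlarge
  refine hn fun i r hr => mem_qPowSubmodule_iff_coeff.1 ?_ i r (Real.lt_toNNReal_iff_coe_lt.2 hr)
  refine finsum_induction (· ∈ qPowSubmodule ι c.toNNReal) (zero_mem _)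
    (fun _ _ => add_mem) fun m => ?_
  exact map_const_add_single_smul_mem_qPowSubmodule hdeg hhom hval' hM hb₀ b₁ hK
    (by omega) m

/-- Convergence lemma for deformed A∞ compositions.  Model the nonnegative Novikov ring
`Λ_{≥0}` as Hahn series over `ℂ` with exponents in `ℝ≥0`, and the graded free
`Λ_{≥0}`-module `A = ⊕_{d∈[d₋,d₊]} A^d` of finite rank via a finite basis `ι` with a degree
function `deg : ι → ℤ` taking values in `[d₋, d₊]`.  Given `Λ_{≥0}`-multilinear maps
`μ^{n,m} : A^{⊗n} → A`, homogeneous of degree `2 − n + m`, with images in `q^{E_m}·A` where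
`E_m → ∞`, and `b = b₀ + q^{E}·b₁` with `b₀` of nonpositive degrees and `E > 0`, the family
`(μⁿ(b,…,b))_{n}` (with `μⁿ = ∑_m μ^{n,m}`) is summable: for every `c ∈ ℝ`, all but finitely
many of its members lie in `q^c·A`. -/
theorem convergent_curvature_summable (ι : Type*) [Fintype ι]
    (deg : ι → ℤ) (dlo dhi : ℤ) (hdeg : ∀ i, dlo ≤ deg i ∧ deg i ≤ dhi)
    (μ : (n : ℕ) → ℤ → MultilinearMap (HahnSeries ℝ≥0 ℂ)
        (fun _ : Fin n => (ι → HahnSeries ℝ≥0 ℂ)) (ι → HahnSeries ℝ≥0 ℂ))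
    (hhom : ∀ (n : ℕ) (m : ℤ) (a : Fin n → (ι → HahnSeries ℝ≥0 ℂ)) (d : Fin n → ℤ),
        (∀ l i, deg i ≠ d l → a l i = 0) →
        ∀ i, deg i ≠ (∑ l, d l) + 2 - (n : ℤ) + m → μ n m a i = 0)
    (E : ℤ → ℝ≥0) (hE : Filter.Tendsto E Filter.atTop Filter.atTop)
    (hval : ∀ (n : ℕ) (m : ℤ) (a : Fin n → (ι → HahnSeries ℝ≥0 ℂ)) (i : ι),
        ∀ r : ℝ≥0, r < E m → (μ n m a i).coeff r = 0)
    (b₀ b₁ : ι → HahnSeries ℝ≥0 ℂ) (hb₀ : ∀ i, 0 < deg i → b₀ i = 0)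
    (Eb : ℝ≥0) (hEb : 0 < Eb) :
    ∀ c : ℝ,
      {n : ℕ | ¬ ∀ (i : ι) (r : ℝ≥0), (r : ℝ) < c →
          ((∑ᶠ m : ℤ,
              μ n m (fun _ => b₀ + (HahnSeries.single Eb (1 : ℂ)) • b₁)) i).coeff r = 0}.Finite :=
  convergent_curvature_summable_general ι deg dlo dhi hdeg μ hhom E hE hval b₀ b₁ hb₀ Eb hEb
end
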